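/- arXiv:2207.02994 — 7 statements merged into one kernel-verified Lean document; each statement's English description precedes it below -/
import Mathlib

section
/- (Singleton-like bound, eq. (1)) Every q-ary (n,k,d,r) locally repairable code satisfies d ≤ n − k − ⌈k/r⌉ + 2. -/
set_option linter.unusedSectionVars false
set_option maxHeartbeats 1000000

open Module


variable {F : Type*} [Field F] [DecidableEq F] {n : ℕ}

/-- Hamming weight of a vector. -/
def wt (c : Fin n → F) : ℕ := (Finset.univ.filter fun i => c i ≠ 0).card

/-- The dual code of a linear code `C ⊆ F^n`. -/
def dualCode (C : Submodule F (Fin n → F)) : Submodule F (Fin n → F) where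
  carrier := {y | ∀ x ∈ C, ∑ i, x i * y i = 0}
  add_mem' := by
    intro a b ha hb x hx
    simp only [Set.mem_setOf_eq] at *
    simp [Pi.add_apply, mul_add, Finset.sum_add_distrib, ha x hx, hb x hx]
  zero_mem' := by intro x hx; simp
  smul_mem' := by
    intro c y hy x hx
    simp only [Set.mem_setOf_eq] at *
    simp [Pi.smul_apply, smul_eq_mul, mul_left_comm, ← Finset.mul_sum, hy x hx]

/-- `d` is the minimum distance of the linear code `C`. -/
def IsMinDist (C : Submodule F (Fin n → F)) (d : ℕ) : Prop :=
  (∃ c ∈ C, c ≠ 0 ∧ wt c = d) ∧ ∀ c ∈ C, c ≠ 0 → d ≤ wt c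

/-- `C` is a locally repairable code with locality `r`. -/
def HasLocality (C : Submodule F (Fin n → F)) (r : ℕ) : Prop :=
  ∀ i : Fin n, ∃ c ∈ dualCode C, wt c ≤ r + 1 ∧ c i ≠ 0

/-- `C` has disjoint local repair groups of size `r+1`. -/
def HasDisjointLRG (C : Submodule F (Fin n → F)) (r : ℕ) : Prop :=
  ∃ P : Finset (Finset (Fin n)),
    (∀ G ∈ P, G.card = r + 1) ∧
    (∀ i : Fin n, ∃! G, G ∈ P ∧ i ∈ G) ∧
    (∀ G ∈ P, ∃ c ∈ dualCode C, ∀ i, c i ≠ 0 ↔ i ∈ G)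



open Module

noncomputable def Ksp (C : Submodule F (Fin n → F)) (S : Finset (Fin n)) : Submodule F (Fin n → F) :=
  C ⊓ ⨅ i ∈ S, LinearMap.ker (LinearMap.proj i)

lemma mem_Ksp {C : Submodule F (Fin n → F)} {S : Finset (Fin n)} {x : Fin n → F} :
    x ∈ Ksp C S ↔ x ∈ C ∧ ∀ i ∈ S, x i = 0 := by
  simp [Ksp, Submodule.mem_inf, Submodule.mem_iInf, LinearMap.mem_ker, LinearMap.proj_apply]

lemma Ksp_mono {C : Submodule F (Fin n → F)} {S S' : Finset (Fin n)} (h : S ⊆ S') :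
    Ksp C S' ≤ Ksp C S := fun x hx => by
  rw [mem_Ksp] at *
  exact ⟨hx.1, fun i hi => hx.2 i (h hi)⟩

lemma finrank_le_inf_ker_add_one (W : Submodule F (Fin n → F)) (f : (Fin n → F) →ₗ[F] F) :
    finrank F W ≤ finrank F ↥(W ⊓ LinearMap.ker f) + 1 := by
  have h1 := Submodule.finrank_sup_add_finrank_inf_eq W (LinearMap.ker f)
  have h2 := LinearMap.finrank_range_add_finrank_ker f
  have h3 : finrank F ↥(LinearMap.range f) ≤ 1 := by
    simpa using Submodule.finrank_le (LinearMap.range f)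
  have h4 : finrank F ↥(W ⊔ LinearMap.ker f) ≤ finrank F (Fin n → F) :=
    Submodule.finrank_le _
  have h5 : finrank F ↥(LinearMap.ker f) ≤ finrank F (Fin n → F) :=
    Submodule.finrank_le _
  omega

lemma Ksp_insert (C : Submodule F (Fin n → F)) (S : Finset (Fin n)) (j : Fin n) :
    Ksp C (insert j S) = Ksp C S ⊓ LinearMap.ker (LinearMap.proj j) := by
  ext x
  simp only [mem_Ksp, Submodule.mem_inf, LinearMap.mem_ker, LinearMap.proj_apply,
    Finset.mem_insert]
  constructor
  · rintro ⟨h1, h2⟩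
    exact ⟨⟨h1, fun i hi => h2 i (Or.inr hi)⟩, h2 j (Or.inl rfl)⟩
  · rintro ⟨⟨h1, h2⟩, h3⟩
    refine ⟨h1, fun i hi => ?_⟩
    rcases hi with rfl | hi
    · exact h3
    · exact h2 i hi

lemma Dstep (C : Submodule F (Fin n → F)) (S : Finset (Fin n)) (j : Fin n) :
    finrank F (Ksp C S) ≤ finrank F (Ksp C (insert j S)) + 1 := by
  rw [Ksp_insert]
  exact finrank_le_inf_ker_add_one _ _

lemma Dunion (C : Submodule F (Fin n → F)) (T : Finset (Fin n)) :
    ∀ S : Finset (Fin n), finrank F (Ksp C S) ≤ finrank F (Ksp C (S ∪ T)) + T.card := by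
  classical
  induction T using Finset.induction_on with
  | empty => intro S; rw [Finset.union_empty]; simp
  | @insert a T ha ih =>
    intro S
    have h1 : S ∪ insert a T = insert a (S ∪ T) := by
      ext x; simp only [Finset.mem_insert, Finset.mem_union]; tauto
    have h2 := ih S
    have h3 := Dstep C (S ∪ T) a
    rw [h1, Finset.card_insert_of_notMem ha]
    omega

lemma Dstrict (C : Submodule F (Fin n → F)) {S S' : Finset (Fin n)} (hss : S ⊆ S')
    {x : Fin n → F} (hx : x ∈ Ksp C S) {i : Fin n} (hi : x i ≠ 0) (hiS' : i ∈ S') :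
    finrank F (Ksp C S') < finrank F (Ksp C S) := by
  apply Submodule.finrank_lt_finrank_of_lt
  refine lt_of_le_of_ne (Ksp_mono hss) ?_
  intro h
  have : x ∈ Ksp C S' := h ▸ hx
  exact hi ((mem_Ksp.mp this).2 i hiS')

lemma Kgroup (C : Submodule F (Fin n → F)) (S : Finset (Fin n)) {c' : Fin n → F}
    (hc' : c' ∈ dualCode C) {j : Fin n} (hj : c' j ≠ 0) :
    Ksp C (S ∪ Finset.univ.filter fun i => c' i ≠ 0)
      = Ksp C (S ∪ (Finset.univ.filter fun i => c' i ≠ 0).erase j) := by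
  set G := Finset.univ.filter fun i => c' i ≠ 0 with hG
  apply le_antisymm
  · apply Ksp_mono
    exact Finset.union_subset_union_right (Finset.erase_subset j G)
  · intro x hx
    rw [mem_Ksp] at *
    obtain ⟨hxC, hxv⟩ := hx
    have hxj : x j = 0 := by
      have hrel : ∑ i, x i * c' i = 0 := hc' x hxC
      have hsum : ∑ i, x i * c' i = x j * c' j := by
        apply Finset.sum_eq_single_of_mem j (Finset.mem_univ j)
        intro b _ hbj
        by_cases hb : c' b = 0
        · simp [hb]
        · have hbG : b ∈ G := by simp [hG, hb]
          have : x b = 0 := hxv b (Finset.mem_union_right _ (Finset.mem_erase.mpr ⟨hbj, hbG⟩))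
          simp [this]
      rw [hsum] at hrel
      exact (mul_eq_zero.mp hrel).resolve_right hj
    refine ⟨hxC, fun i hi => ?_⟩
    rcases Finset.mem_union.mp hi with hiS | hiG
    · exact hxv i (Finset.mem_union_left _ hiS)
    · by_cases hij : i = j
      · exact hij ▸ hxj
      · exact hxv i (Finset.mem_union_right _ (Finset.mem_erase.mpr ⟨hij, hiG⟩))

lemma exOne (C : Submodule F (Fin n → F)) :
    ∀ T S : Finset (Fin n), 1 ≤ finrank F (Ksp C S) →
      finrank F (Ksp C (S ∪ T)) ≤ 1 →
      ∃ T' ⊆ T, finrank F (Ksp C (S ∪ T')) = 1 := by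
  classical
  intro T
  induction T using Finset.strongInduction with
  | _ T ih =>
    intro S hS hST
    by_cases h1 : finrank F (Ksp C (S ∪ T)) = 1
    · exact ⟨T, Finset.Subset.refl T, h1⟩
    · have h0 : finrank F (Ksp C (S ∪ T)) = 0 := by omega
      have hTne : T.Nonempty := by
        rcases T.eq_empty_or_nonempty with rfl | h
        · rw [Finset.union_empty] at h0; omega
        · exact h
      obtain ⟨t, ht⟩ := hTne
      have hins : S ∪ T = insert t (S ∪ T.erase t) := by
        ext x
        simp only [Finset.mem_insert, Finset.mem_union, Finset.mem_erase]
        constructor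
        · rintro (h | h)
          · tauto
          · by_cases hx : x = t <;> tauto
        · rintro (rfl | h | ⟨_, h⟩) <;> tauto
      have hd : finrank F (Ksp C (S ∪ T.erase t)) ≤ 1 := by
        have := Dstep C (S ∪ T.erase t) t
        rw [← hins] at this
        omega
      obtain ⟨T', hT'sub, hT'⟩ := ih (T.erase t) (Finset.erase_ssubset ht) S hS hd
      exact ⟨T', hT'sub.trans (Finset.erase_subset t T), hT'⟩

lemma mainLemma (k r : ℕ) (hr : 1 ≤ r) (C : Submodule F (Fin n → F))
    (hloc : ∀ i : Fin n, ∃ c ∈ dualCode C, wt c ≤ r + 1 ∧ c i ≠ 0) :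
    ∀ m : ℕ, ∀ S : Finset (Fin n), finrank F (Ksp C S) = m → 1 ≤ m →
      (r+1)*k ≤ r*S.card + (r+1)*m →
      ∃ S' : Finset (Fin n), 1 ≤ finrank F (Ksp C S') ∧ (r+1)*k ≤ r*S'.card + 2*r := by
  classical
  intro m
  induction m using Nat.strong_induction_on with
  | _ m ih =>
    intro S hm hm1 hinv
    by_cases hm2 : m = 1
    · subst hm2
      refine ⟨S, by omega, ?_⟩
      have h2r : r + 1 ≤ 2*r := by omega
      nlinarith
    -- m ≥ 2
    have hm2' : 2 ≤ m := by omega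
    -- pick a nonzero x ∈ Ksp C S
    have hne : Ksp C S ≠ ⊥ := by
      intro h
      rw [h, finrank_bot] at hm
      omega
    obtain ⟨x, hxK, hx0⟩ := Submodule.exists_mem_ne_zero_of_ne_bot hne
    obtain ⟨i, hxi⟩ : ∃ i, x i ≠ 0 := by
      by_contra h
      push_neg at h
      exact hx0 (funext h)
    have hiS : i ∉ S := fun h => hxi ((mem_Ksp.mp hxK).2 i h)
    obtain ⟨c', hc'dual, hc'wt, hc'i⟩ := hloc i
    set G := Finset.univ.filter fun j => c' j ≠ 0 with hGdef
    have hiG : i ∈ G := by simp [hGdef, hc'i]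
    have hGcard : G.card ≤ r + 1 := hc'wt
    set b := (G \ S).card with hbdef
    have hib : i ∈ G \ S := Finset.mem_sdiff.mpr ⟨hiG, hiS⟩
    have hb1 : 1 ≤ b := Finset.card_pos.mpr ⟨i, hib⟩
    have hbr : b ≤ r + 1 := le_trans (Finset.card_le_card (Finset.sdiff_subset)) hGcard
    -- drop bound: m + 1 ≤ finrank (S ∪ G) + b
    have hdrop : m + 1 ≤ finrank F (Ksp C (S ∪ G)) + b := by
      have heq := Kgroup C S hc'dual hc'i
      have hTeq : S ∪ G.erase i = S ∪ (G \ S).erase i := by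
        ext z
        simp only [Finset.mem_union, Finset.mem_erase, Finset.mem_sdiff]
        by_cases hz : z ∈ S <;> tauto
      have hDT := Dunion C ((G \ S).erase i) S
      have hcardT : ((G \ S).erase i).card = b - 1 := by
        rw [Finset.card_erase_of_mem hib]
      rw [heq, hTeq] at *
      omega
    have hstrict : finrank F (Ksp C (S ∪ G)) < m := by
      rw [← hm]
      exact Dstrict C (Finset.subset_union_left) hxK hxi
        (Finset.mem_union_right _ hiG)
    have hcardSG : (S ∪ G).card = S.card + b := by
      have h := Finset.card_sdiff_add_card G S
      rw [Finset.union_comm G S] at h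
      omega
    set m' := finrank F (Ksp C (S ∪ G)) with hm'def
    by_cases hm'0 : m' = 0
    · -- overshoot: partial step
      have hmr : m ≤ r := by omega
      have hSTeq : S ∪ (G \ S) = S ∪ G := Finset.union_sdiff_self_eq_union
      have hle1 : finrank F (Ksp C (S ∪ (G \ S))) ≤ 1 := by rw [hSTeq]; omega
      obtain ⟨T', hT'sub, hT'rank⟩ := exOne C (G \ S) S (by omega) hle1
      have hT'card : m ≤ 1 + T'.card := by
        have := Dunion C T' S
        omega
      have hdisj : Disjoint S T' := by
        have : T' ⊆ G \ S := hT'sub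
        rw [Finset.disjoint_right]
        intro a haT'
        exact (Finset.mem_sdiff.mp (this haT')).2
      have hcard : (S ∪ T').card = S.card + T'.card := Finset.card_union_of_disjoint hdisj
      refine ⟨S ∪ T', by omega, ?_⟩
      rw [hcard]
      nlinarith
    · -- full step: recurse
      have hm'1 : 1 ≤ m' := by omega
      obtain ⟨δ, hδeq, hδ1⟩ : ∃ δ, m = m' + δ ∧ 1 ≤ δ := ⟨m - m', by omega, by omega⟩
      have hδb : δ + 1 ≤ b := by omega
      have hδr : δ ≤ r := by omega
      have hkey : (r+1)*δ ≤ r*b := by nlinarith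
      refine ih m' hstrict (S ∪ G) rfl hm'1 ?_
      rw [hcardSG]
      nlinarith


/-- **Singleton-like bound.** Every `q`-ary `(n,k,d,r)` locally repairable code satisfies
`d ≤ n − k − ⌈k/r⌉ + 2`. -/
theorem singleton_like_bound
    (F : Type*) [Field F] [Fintype F] [DecidableEq F]
    (n k d r : ℕ) (hk : 1 ≤ k) (hr : 1 ≤ r)
    (C : Submodule F (Fin n → F))
    (hdim : Module.finrank F C = k)
    (hdist : IsMinDist C d)
    (hloc : HasLocality C r) :
    (d : ℤ) ≤ (n : ℤ) - k - ⌈(k : ℚ) / (r : ℚ)⌉ + 2 := by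
  classical
  have hK0 : Ksp C ∅ = C := by
    ext x; simp [mem_Ksp]
  have hbase : Module.finrank F (Ksp C ∅) = k := by rw [hK0]; exact hdim
  obtain ⟨S', hS'rank, hS'count⟩ :=
    mainLemma k r hr C hloc k ∅ hbase hk (by simp)
  -- nonzero codeword vanishing on S'
  have hne : Ksp C S' ≠ ⊥ := by
    intro h
    rw [h, finrank_bot] at hS'rank
    omega
  obtain ⟨x, hxK, hx0⟩ := Submodule.exists_mem_ne_zero_of_ne_bot hne
  obtain ⟨hxC, hxv⟩ := mem_Ksp.mp hxK
  -- weight bound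
  have hdisj : Disjoint (Finset.univ.filter fun i => x i ≠ 0) S' := by
    rw [Finset.disjoint_right]
    intro a haS'
    simp only [Finset.mem_filter, not_and, Decidable.not_not]
    intro _
    exact hxv a haS'
  have hwtcard : wt x + S'.card ≤ n := by
    have h1 := Finset.card_union_of_disjoint hdisj
    have h2 : ((Finset.univ.filter fun i => x i ≠ 0) ∪ S').card ≤ n := by
      have := Finset.card_le_univ ((Finset.univ.filter fun i => x i ≠ 0) ∪ S')
      simpa using this
    rw [h1] at h2
    exact h2
  have hd : d ≤ wt x := hdist.2 x hxC hx0
  -- ceiling bound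
  have hceil : ⌈(k : ℚ) / (r : ℚ)⌉ ≤ (S'.card : ℤ) - k + 2 := by
    rw [Int.ceil_le]
    have hrpos : (0:ℚ) < (r:ℚ) := by exact_mod_cast hr
    rw [div_le_iff₀ hrpos]
    have hQ : ((r:ℚ)+1)*k ≤ r*S'.card + 2*r := by exact_mod_cast hS'count
    push_cast
    nlinarith
  have hn : (d:ℤ) + (S'.card : ℤ) ≤ n := by exact_mod_cast le_trans (by omega) hwtcard
  linarith
end

section
/- (Lemma 2) Let n, k, d, r be positive integers and q a prime power. If d − 2 ≡ r (mod r+1), then there exists no (n,k,d,r)_q LRC satisfying (r+1) | n and n − k − ⌈k/r⌉ + 2 = d. -/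
variable {F : Type*} [Field F] [DecidableEq F] {n : ℕ}

/-- **Lemma 2.** Let `n, k, d, r` be positive integers and `q` a prime power (realized as the
cardinality of a finite field `F`). If `d − 2 ≡ r (mod r+1)`, then there exists no
`(n,k,d,r)_q` LRC satisfying `(r+1) ∣ n` and `n − k − ⌈k/r⌉ + 2 = d`. -/
theorem lemma2_no_optimal_LRC
    (F : Type*) [Field F] [Fintype F] [DecidableEq F] (q : ℕ) (hq : Fintype.card F = q)
    (n k d r : ℕ) (hn : 0 < n) (hk : 0 < k) (hd : 0 < d) (hr : 0 < r)
    (hmod : (d : ℤ) - 2 ≡ (r : ℤ) [ZMOD ((r : ℤ) + 1)]) :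
    ¬ ∃ C : Submodule F (Fin n → F),
        Module.finrank F C = k ∧ IsMinDist C d ∧ HasLocality C r ∧
        (r + 1) ∣ n ∧ (n : ℤ) - k - ⌈(k : ℚ) / (r : ℚ)⌉ + 2 = (d : ℤ) := by
  rintro ⟨C, -, -, -, ⟨m, hm⟩, heq⟩
  set c : ℤ := ⌈(k : ℚ) / (r : ℚ)⌉ with hc
  have hrQ : (0 : ℚ) < (r : ℚ) := by exact_mod_cast hr
  have h1 : (k : ℤ) ≤ r * c := by
    have := Int.le_ceil ((k : ℚ) / (r : ℚ))
    rw [div_le_iff₀ hrQ] at this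
    exact_mod_cast (by linarith : (k : ℚ) ≤ (r : ℚ) * (c : ℚ))
  have h2 : (r : ℤ) * (c - 1) < k := by
    have h := Int.ceil_lt_add_one ((k : ℚ) / (r : ℚ))
    rw [← hc] at h
    have h3 : ((c : ℚ) - 1) * r < k := (lt_div_iff₀ hrQ).mp (by linarith)
    exact_mod_cast (by linarith : (r : ℚ) * ((c : ℚ) - 1) < (k : ℚ))
  -- from hmod and heq : (r+1) ∣ (k + c + r)
  have hdvd : ((r : ℤ) + 1) ∣ ((r : ℤ) - (r * c - k)) := by
    have hd1 : ((r : ℤ) + 1) ∣ ((r : ℤ) - ((d : ℤ) - 2)) := hmod.dvd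
    have hn' : (n : ℤ) = ((r : ℤ) + 1) * m := by exact_mod_cast hm
    have : (r : ℤ) - (r * c - k) =
        ((r : ℤ) - ((d : ℤ) - 2)) + ((r : ℤ) + 1) * m - ((r : ℤ) + 1) * c := by
      rw [← heq, hn']; ring
    rw [this]
    exact dvd_sub (dvd_add hd1 ⟨m, rfl⟩) ⟨c, rfl⟩
  have hpos : 0 < (r : ℤ) - (r * c - k) := by linarith
  have hle : (r : ℤ) - (r * c - k) ≤ r := by linarith [h1]
  have := Int.le_of_dvd hpos hdvd
  linarith
end

section
/- (Corollary 1) Let q be a prime power, L ≥ 4 an integer, and let C be an (n,k,d,r)_q LRC with locality r = 2, length n = 3L satisfying n > q + 4, and dimension k = 2(L−2). Then the minimum distance of C satisfies d ≤ 7. -/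
variable {F : Type*} [Field F] [DecidableEq F] {n : ℕ}

set_option linter.unusedSectionVars false
set_option linter.unusedVariables false

namespace Cor1

/-- The standard dot-product bilinear form on `F^n`. -/
noncomputable def Bf : LinearMap.BilinForm F (Fin n → F) :=
  LinearMap.mk₂ F (fun x y => ∑ i, x i * y i)
    (by intro x x' y; simp [add_mul, Finset.sum_add_distrib])
    (by intro a x y; simp [Finset.mul_sum, mul_assoc])
    (by intro x y y'; simp [mul_add, Finset.sum_add_distrib])
    (by intro a x y; simp [Finset.mul_sum]; ring_nf; simp [mul_comm, mul_left_comm])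

@[simp] lemma Bf_apply (x y : Fin n → F) : Bf x y = ∑ i, x i * y i := rfl

lemma Bf_symm (x y : Fin n → F) : Bf x y = Bf y x := by
  simp [mul_comm]

lemma Bf_isRefl : (Bf (F := F) (n := n)).IsRefl := by
  intro x y h
  rw [Bf_symm]
  exact h

lemma Bf_nondeg : (Bf (F := F) (n := n)).Nondegenerate := by
  have hL : ∀ x : Fin n → F, (∀ y, Bf x y = 0) → x = 0 := by
    intro x hx
    funext i
    have := hx (Pi.single i 1)
    simp only [Bf_apply] at this
    rw [Finset.sum_eq_single i] at this
    · simpa using this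
    · intro b _ hb; simp [Pi.single_apply, hb]
    · intro h; exact absurd (Finset.mem_univ i) h
  exact ⟨hL, fun y hy => hL y (fun x => by rw [Bf_symm]; exact hy x)⟩

lemma dualCode_eq_orthogonal (C : Submodule F (Fin n → F)) :
    dualCode C = Bf.orthogonal C := by
  ext y
  constructor
  · intro hy x hx
    exact hy x hx
  · intro hy x hx
    exact hy x hx

open Module

lemma finrank_dualCode (C : Submodule F (Fin n → F)) :
    finrank F (dualCode C) = n - finrank F C := by
  rw [dualCode_eq_orthogonal, LinearMap.BilinForm.finrank_orthogonal Bf_nondeg,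
    Module.finrank_fintype_fun_eq_card, Fintype.card_fin]

lemma finrank_le_n (C : Submodule F (Fin n → F)) : finrank F C ≤ n := by
  have := Submodule.finrank_le C
  rwa [Module.finrank_fintype_fun_eq_card, Fintype.card_fin] at this

lemma dualCode_dualCode (C : Submodule F (Fin n → F)) :
    dualCode (dualCode C) = C := by
  rw [dualCode_eq_orthogonal, dualCode_eq_orthogonal]
  exact LinearMap.BilinForm.orthogonal_orthogonal Bf_nondeg Bf_isRefl C

end Cor1

namespace Cor1

open Module

/-- Support of a vector as a Finset. -/
def suppF (c : Fin n → F) : Finset (Fin n) := Finset.univ.filter fun i => c i ≠ 0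

lemma wt_eq_card_suppF (c : Fin n → F) : wt c = (suppF c).card := rfl

lemma mem_suppF {c : Fin n → F} {i : Fin n} : i ∈ suppF c ↔ c i ≠ 0 := by
  simp [suppF]

lemma not_mem_suppF {c : Fin n → F} {i : Fin n} : i ∉ suppF c ↔ c i = 0 := by
  simp [suppF]

/-- Vectors supported inside `G`. -/
def coordSub (G : Finset (Fin n)) : Submodule F (Fin n → F) where
  carrier := {x | ∀ j ∉ G, x j = 0}
  add_mem' := by intro a b ha hb j hj; simp [ha j hj, hb j hj]
  zero_mem' := by intro j hj; simp
  smul_mem' := by intro c x hx j hj; simp [hx j hj]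

lemma mem_coordSub {G : Finset (Fin n)} {x : Fin n → F} :
    x ∈ (coordSub G : Submodule F (Fin n → F)) ↔ ∀ j ∉ G, x j = 0 := Iff.rfl

lemma suppF_subset_iff_mem_coordSub {G : Finset (Fin n)} {x : Fin n → F} :
    x ∈ (coordSub G : Submodule F (Fin n → F)) ↔ suppF x ⊆ G := by
  constructor
  · intro h i hi
    by_contra hiG
    exact (mem_suppF.mp hi) (h i hiG)
  · intro h j hj
    by_contra h0
    exact hj (h (mem_suppF.mpr h0))

lemma finrank_coordSub (G : Finset (Fin n)) :
    finrank F (coordSub (F := F) G) = G.card := by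
  classical
  let ρ : (coordSub (F := F) G) →ₗ[F] (G → F) :=
    { toFun := fun x j => (x : Fin n → F) j
      map_add' := by intro a b; rfl
      map_smul' := by intro a b; rfl }
  have hinj : Function.Injective ρ := by
    intro a b hab
    ext j
    by_cases hj : j ∈ G
    · exact congrFun hab ⟨j, hj⟩
    · rw [a.2 j hj, b.2 j hj]
  have hsurj : Function.Surjective ρ := by
    intro f
    refine ⟨⟨fun j => if hj : j ∈ G then f ⟨j, hj⟩ else 0, ?_⟩, ?_⟩
    · intro j hj; simp [hj]
    · ext j; simp [ρ, j.2]
  have := LinearEquiv.finrank_eq (LinearEquiv.ofBijective ρ ⟨hinj, hsurj⟩)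
  rw [this, Module.finrank_fintype_fun_eq_card, Fintype.card_coe]

lemma Bf_eq_zero_of_disjoint {w x : Fin n → F} (h : ∀ j, w j = 0 ∨ x j = 0) :
    Bf w x = 0 := by
  rw [Bf_apply]
  apply Finset.sum_eq_zero
  intro j _
  rcases h j with h' | h' <;> simp [h']

/-- Shortening lemma: `t` independent dual words supported in `W` with `W.card < k + t`
    give a nonzero codeword vanishing on `W`. -/
lemma shortening (C : Submodule F (Fin n → F)) (S : Finset (Fin n → F))
    (hind : LinearIndependent F ((↑) : ↥(S : Set (Fin n → F)) → (Fin n → F)))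
    (hyD : ∀ v ∈ S, v ∈ dualCode C)
    (W : Finset (Fin n)) (hsupp : ∀ v ∈ S, suppF v ⊆ W)
    (hcard : W.card < finrank F C + S.card) :
    ∃ c ∈ C, c ≠ 0 ∧ ∀ i ∈ W, c i = 0 := by
  classical
  set Z : Submodule F (Fin n → F) := coordSub (Wᶜ) with hZ
  have hZrank : finrank F Z = n - W.card := by
    rw [hZ, finrank_coordSub, Finset.card_compl, Fintype.card_fin]
  set Y : Submodule F (Fin n → F) := Submodule.span F (S : Set (Fin n → F)) with hY
  have hYrank : finrank F Y = S.card := by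
    rw [hY, finrank_span_finset_eq_card hind]
  have hle : C ⊔ Z ≤ dualCode Y := by
    apply sup_le
    · intro x hx u hu
      have : ∀ u ∈ Y, Bf u x = 0 := by
        intro u hu
        induction hu using Submodule.span_induction with
        | mem u hu =>
          have hu' : u ∈ S := by exact_mod_cast hu
          have := hyD u hu' x hx
          rw [Bf_apply]
          rw [Finset.sum_congr rfl (fun i _ => mul_comm (u i) (x i))]
          exact this
        | zero => simp
        | add u v _ _ hu hv => rw [map_add]; simp [hu, hv]
        | smul a u _ hu => rw [map_smul]; simp [hu]
      exact this u hu
    · intro z hz u hu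
      have : ∀ u ∈ Y, Bf u z = 0 := by
        intro u hu
        induction hu using Submodule.span_induction with
        | mem u hu =>
          have hu' : u ∈ S := by exact_mod_cast hu
          apply Bf_eq_zero_of_disjoint
          intro j
          by_cases hj : j ∈ W
          · right
            exact hz j (by simpa using hj)
          · left
            exact not_mem_suppF.mp (fun hc => hj (hsupp u hu' hc))
        | zero => simp
        | add u v _ _ hu hv => rw [map_add]; simp [hu, hv]
        | smul a u _ hu => rw [map_smul]; simp [hu]
      exact this u hu
  have hdY : finrank F (dualCode Y) = n - S.card := by
    rw [finrank_dualCode, hYrank]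
  have hsuple : finrank F (C ⊔ Z : Submodule F (Fin n → F)) ≤ n - S.card := by
    rw [← hdY]
    exact Submodule.finrank_mono hle
  have hinf : 0 < finrank F (C ⊓ Z : Submodule F (Fin n → F)) := by
    have hq := Submodule.finrank_sup_add_finrank_inf_eq C Z
    have htn : S.card ≤ n := by
      have := finrank_le_n Y
      omega
    have hWn : W.card ≤ n := by
      have := W.card_le_card (Finset.subset_univ W)
      simpa using this
    omega
  have : (C ⊓ Z : Submodule F (Fin n → F)) ≠ ⊥ := by
    intro hbot
    rw [hbot, finrank_bot] at hinf
    omega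
  obtain ⟨c, hc, hc0⟩ := Submodule.exists_mem_ne_zero_of_ne_bot this
  exact ⟨c, hc.1, hc0, fun i hi => hc.2 i (by simpa using hi)⟩

end Cor1

namespace Cor1

open Module

lemma suppF_smul {a : F} (ha : a ≠ 0) (x : Fin n → F) : suppF (a • x) = suppF x := by
  ext i
  simp [suppF, smul_eq_mul, ha]

lemma greedy (C : Submodule F (Fin n → F)) (y : Fin n → (Fin n → F))
    (hyD : ∀ i, y i ∈ dualCode C) (hyw : ∀ i, wt (y i) ≤ 3) (hyi : ∀ i, y i i ≠ 0) :
    ∀ (m : ℕ) (S : Finset (Fin n → F)) (U : Finset (Fin n)),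
      LinearIndependent F ((↑) : ↥(S : Set (Fin n → F)) → (Fin n → F)) →
      (∀ v ∈ S, v ∈ dualCode C) → (∀ v ∈ S, suppF v ⊆ U) →
      U.card + 3 * m < n →
      ∃ (S' : Finset (Fin n → F)) (U' : Finset (Fin n)),
        S'.card = S.card + m ∧
        LinearIndependent F ((↑) : ↥(S' : Set (Fin n → F)) → (Fin n → F)) ∧
        (∀ v ∈ S', v ∈ dualCode C) ∧ (∀ v ∈ S', suppF v ⊆ U') ∧
        U'.card ≤ U.card + 3 * m := by
  intro m
  induction m with
  | zero =>
    intro S U hind hD hsupp _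
    exact ⟨S, U, by omega, hind, hD, hsupp, by omega⟩
  | succ m ih =>
    intro S U hind hD hsupp hlt
    -- find a coordinate outside U
    have hUn : U.card < n := by omega
    have : ∃ i, i ∉ U := by
      by_contra h
      push_neg at h
      have : U = Finset.univ := Finset.eq_univ_iff_forall.mpr h
      rw [this] at hUn
      simp at hUn
    obtain ⟨i, hi⟩ := this
    have hyiU : y i ∉ (coordSub U : Submodule F (Fin n → F)) := by
      intro hmem
      exact hyi i (hmem i hi)
    have hspan : Submodule.span F (S : Set (Fin n → F)) ≤ coordSub U := by
      rw [Submodule.span_le]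
      intro v hv
      exact suppF_subset_iff_mem_coordSub.mpr (hsupp v (by exact_mod_cast hv))
    have hyS : y i ∉ S := by
      intro hmem
      have := hsupp (y i) hmem
      exact hyi i (not_mem_suppF.mp (fun hc => hi (this hc)))
    have hind' : LinearIndependent F
        ((↑) : ↥((insert (y i) S : Finset (Fin n → F)) : Set (Fin n → F)) → (Fin n → F)) := by
      rw [Finset.coe_insert]
      exact LinearIndepOn.id_insert hind (fun hc => hyiU (hspan hc))
    have hstep := ih (insert (y i) S) (U ∪ suppF (y i)) hind'
      (by
        intro v hv
        rcases Finset.mem_insert.mp hv with rfl | hv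
        · exact hyD i
        · exact hD v hv)
      (by
        intro v hv
        rcases Finset.mem_insert.mp hv with rfl | hv
        · exact fun j hj => Finset.mem_union_right _ hj
        · exact fun j hj => Finset.mem_union_left _ (hsupp v hv hj))
      (by
        have h1 : (U ∪ suppF (y i)).card ≤ U.card + 3 := by
          have := Finset.card_union_le U (suppF (y i))
          have h2 := hyw i
          rw [wt_eq_card_suppF] at h2
          omega
        omega)
    obtain ⟨S', U', hcard', hind'', hD', hsupp', hU'⟩ := hstep
    refine ⟨S', U', ?_, hind'', hD', hsupp', ?_⟩
    · rw [hcard', Finset.card_insert_of_notMem hyS]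
      omega
    · have h1 : (U ∪ suppF (y i)).card ≤ U.card + 3 := by
        have := Finset.card_union_le U (suppF (y i))
        have h2 := hyw i
        rw [wt_eq_card_suppF] at h2
        omega
      omega

end Cor1

namespace Cor1

open Module

lemma nonpartition_codeword (C : Submodule F (Fin n → F)) {L : ℕ} (hL : 4 ≤ L)
    (hn : n = 3 * L) (hdim : finrank F C = 2 * (L - 2))
    (y : Fin n → (Fin n → F))
    (hyD : ∀ i, y i ∈ dualCode C) (hyw : ∀ i, wt (y i) ≤ 3) (hyi : ∀ i, y i i ≠ 0)
    (S : Finset (Fin n → F)) (U : Finset (Fin n))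
    (hind : LinearIndependent F ((↑) : ↥(S : Set (Fin n → F)) → (Fin n → F)))
    (hD : ∀ v ∈ S, v ∈ dualCode C) (hsupp : ∀ v ∈ S, suppF v ⊆ U)
    (hS1 : 1 ≤ S.card) (hSL : S.card ≤ L - 2) (hU : U.card + 1 ≤ 3 * S.card) :
    ∃ c ∈ C, c ≠ 0 ∧ wt c ≤ 7 := by
  classical
  obtain ⟨S', U', hcard', hind', hD', hsupp', hU'⟩ :=
    greedy C y hyD hyw hyi (L - 2 - S.card) S U hind hD hsupp (by omega)
  have hS'card : S'.card = L - 2 := by omega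
  have hU'card : U'.card ≤ 3 * L - 7 := by omega
  obtain ⟨W, hUW, _, hWcard⟩ := Finset.exists_subsuperset_card_eq (Finset.subset_univ U')
    (by omega : U'.card ≤ 3 * L - 7)
    (by rw [Finset.card_univ, Fintype.card_fin]; omega)
  obtain ⟨c, hcC, hc0, hcW⟩ := shortening C S' hind' hD' W
    (fun v hv => (hsupp' v hv).trans hUW) (by rw [hWcard, hdim, hS'card]; omega)
  refine ⟨c, hcC, hc0, ?_⟩
  rw [wt_eq_card_suppF]
  have hsub : suppF c ⊆ Wᶜ := by
    intro i hi
    rw [Finset.mem_compl]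
    intro hiW
    exact mem_suppF.mp hi (hcW i hiW)
  have := Finset.card_le_card hsub
  rw [Finset.card_compl, Fintype.card_fin, hWcard] at this
  omega

end Cor1

namespace Cor1

open Module

/-- vector supported on `{s,t}` orthogonal to `w` there. -/
def pairVec (w : Fin n → F) (s t : Fin n) : Fin n → F :=
  fun j => if j = s then w t else if j = t then -(w s) else 0

lemma pairVec_s {w : Fin n → F} {s t : Fin n} : pairVec w s t s = w t := by
  simp [pairVec]

lemma pairVec_t {w : Fin n → F} {s t : Fin n} (hst : s ≠ t) : pairVec w s t t = -(w s) := by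
  simp [pairVec, hst.symm]

lemma pairVec_other {w : Fin n → F} {s t j : Fin n} (hs : j ≠ s) (ht : j ≠ t) :
    pairVec w s t j = 0 := by
  simp [pairVec, hs, ht]

lemma pairVec_suppF {w : Fin n → F} {s t : Fin n} :
    suppF (pairVec w s t) ⊆ {s, t} := by
  intro j hj
  rw [mem_suppF] at hj
  by_contra h
  simp only [Finset.mem_insert, Finset.mem_singleton, not_or] at h
  exact hj (pairVec_other h.1 h.2)

lemma Bf_pairVec {w : Fin n → F} {s t : Fin n} (hst : s ≠ t) :
    Bf w (pairVec w s t) = 0 := by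
  rw [Bf_apply, ← Finset.sum_subset (Finset.subset_univ ({s, t} : Finset (Fin n)))]
  · rw [Finset.sum_pair hst, pairVec_s, pairVec_t hst]
    ring
  · intro j _ hj
    simp only [Finset.mem_insert, Finset.mem_singleton, not_or] at hj
    rw [pairVec_other hj.1 hj.2, mul_zero]

lemma suppF_sub_subset (a b : Fin n → F) : suppF (a - b) ⊆ suppF a ∪ suppF b := by
  intro i hi
  rw [mem_suppF] at hi
  by_contra h
  simp only [Finset.mem_union, mem_suppF, not_or, not_not] at h
  apply hi
  simp [Pi.sub_apply, h.1, h.2]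

lemma suppF_smul_subset (a : F) (x : Fin n → F) : suppF (a • x) ⊆ suppF x := by
  intro i hi
  rw [mem_suppF] at hi
  rw [mem_suppF]
  intro h
  apply hi
  simp [h]

lemma suppF_add_subset (a b : Fin n → F) : suppF (a + b) ⊆ suppF a ∪ suppF b := by
  intro i hi
  rw [mem_suppF] at hi
  by_contra h
  simp only [Finset.mem_union, mem_suppF, not_or, not_not] at h
  apply hi
  simp [Pi.add_apply, h.1, h.2]

/-- ratio of the coordinates, as a point of `P¹(F) = F ∪ {∞}`. -/
def ratio (w : Fin 2 → F) : Option F := if w 1 = 0 then none else some (w 0 / w 1)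

lemma ratio_prop {u v : Fin 2 → F} (hu : u ≠ 0) (hv : v ≠ 0) (h : ratio u = ratio v) :
    ∃ α : F, α ≠ 0 ∧ v = α • u := by
  unfold ratio at h
  by_cases h1 : u 1 = 0
  · rw [if_pos h1] at h
    by_cases h2 : v 1 = 0
    · have hu0 : u 0 ≠ 0 := by
        intro hc
        apply hu
        funext j
        fin_cases j <;> simp [hc, h1]
      refine ⟨v 0 / u 0, ?_, ?_⟩
      · intro hc
        apply hv
        have : v 0 = 0 := by
          field_simp at hc
          simpa using hc
        funext j
        fin_cases j <;> simp [this, h2]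
      · funext j
        fin_cases j <;> simp [h1, h2]
        field_simp
    · rw [if_neg h2] at h
      exact absurd h (by simp)
  · rw [if_neg h1] at h
    by_cases h2 : v 1 = 0
    · rw [if_pos h2] at h
      exact absurd h (by simp)
    · rw [if_neg h2] at h
      simp only [Option.some.injEq] at h
      refine ⟨v 1 / u 1, div_ne_zero h2 h1, ?_⟩
      have h3 : u 0 * v 1 = v 0 * u 1 := (div_eq_div_iff h1 h2).mp h
      funext j
      fin_cases j
      · show v 0 = (v 1 / u 1) * u 0
        field_simp
        linear_combination -h3
      · show v 1 = (v 1 / u 1) * u 1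
        field_simp

end Cor1

namespace Cor1

open Module

set_option maxHeartbeats 1000000 in
set_option synthInstance.maxHeartbeats 400000 in
lemma partition_contra {q : ℕ} [Fintype F] (hq : Fintype.card F = q)
    (C : Submodule F (Fin n → F)) {L : ℕ} (hL : 4 ≤ L) (hn : n = 3 * L)
    (hngt : n > q + 4) (hdim : finrank F C = 2 * (L - 2))
    (y : Fin n → (Fin n → F))
    (hyD : ∀ i, y i ∈ dualCode C) (hyw3 : ∀ i, wt (y i) = 3) (hyi : ∀ i, y i i ≠ 0)
    (heqd : ∀ i j, suppF (y i) = suppF (y j) ∨ Disjoint (suppF (y i)) (suppF (y j)))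
    (hmin : ∀ c ∈ C, c ≠ 0 → 8 ≤ wt c) : False := by
  classical
  -- the support of `y i` as a nonzero coordinate forces equal supports
  have key : ∀ i j : Fin n, y j i ≠ 0 → suppF (y i) = suppF (y j) := by
    intro i j hji
    rcases heqd i j with h | h
    · exact h
    · exact absurd (Finset.disjoint_left.mp h (mem_suppF.mpr (hyi i)) (mem_suppF.mpr hji))
        (fun hc => hc)
  -- representatives: minima of the groups
  set R : Finset (Fin n) := Finset.univ.filter (fun i => ∀ j ∈ suppF (y i), i ≤ j) with hR
  have hRuniq : ∀ a ∈ R, ∀ b ∈ R, suppF (y a) = suppF (y b) → a = b := by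
    intro a ha b hb hab
    rw [hR, Finset.mem_filter] at ha hb
    refine le_antisymm (ha.2 b ?_) (hb.2 a ?_)
    · rw [hab]; exact mem_suppF.mpr (hyi b)
    · rw [← hab]; exact mem_suppF.mpr (hyi a)
  have hcover : ∀ j, ∃ i ∈ R, suppF (y i) = suppF (y j) := by
    intro j
    have hne : (suppF (y j)).Nonempty := ⟨j, mem_suppF.mpr (hyi j)⟩
    set i := (suppF (y j)).min' hne with hi
    have himem : i ∈ suppF (y j) := Finset.min'_mem _ _
    have hsupp : suppF (y i) = suppF (y j) := key i j (mem_suppF.mp himem)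
    refine ⟨i, ?_, hsupp⟩
    rw [hR, Finset.mem_filter]
    refine ⟨Finset.mem_univ _, ?_⟩
    intro j' hj'
    rw [hsupp] at hj'
    exact Finset.min'_le _ _ hj'
  choose rep hrepR hrepS using hcover
  have hrep_self : ∀ r ∈ R, rep r = r := fun r hr => hRuniq _ (hrepR r) _ hr (hrepS r)
  have hdisjR : ∀ a ∈ R, ∀ b ∈ R, a ≠ b → Disjoint (suppF (y a)) (suppF (y b)) := by
    intro a ha b hb hab
    rcases heqd a b with h | h
    · exact absurd (hRuniq a ha b hb h) hab
    · exact h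
  -- groups
  set G : Fin n → Finset (Fin n) := fun i => suppF (y (rep i)) with hGdef
  set z : Fin n → (Fin n → F) := fun i => y (rep i) with hzdef
  have hGi : ∀ i, i ∈ G i := by
    intro i
    show i ∈ suppF (y (rep i))
    rw [hrepS i]
    exact mem_suppF.mpr (hyi i)
  have hGcard : ∀ i, (G i).card = 3 := by
    intro i
    show (suppF (y (rep i))).card = 3
    rw [← wt_eq_card_suppF]
    exact hyw3 _
  have hGz : ∀ i j, z i j ≠ 0 ↔ j ∈ G i := fun i j => mem_suppF.symm
  have hGrep : ∀ i j, j ∈ G i → rep j = rep i := by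
    intro i j hj
    have h1 : suppF (y j) = suppF (y (rep i)) := key j (rep i) (mem_suppF.mp hj)
    apply hRuniq _ (hrepR j) _ (hrepR i)
    rw [hrepS j, h1, hrepS i]
  have hGdisj : ∀ i j, rep i ≠ rep j → Disjoint (G i) (G j) :=
    fun i j h => hdisjR _ (hrepR i) _ (hrepR j) h
  have hGeq : ∀ i j, rep i = rep j → G i = G j := by
    intro i j h
    show suppF (y (rep i)) = suppF (y (rep j))
    rw [h]
  -- L ≤ R.card
  have hRcard : L ≤ R.card := by
    have hsub : Finset.univ ⊆ R.biUnion (fun i => suppF (y i)) := by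
      intro j _
      rw [Finset.mem_biUnion]
      exact ⟨rep j, hrepR j, by rw [hrepS j]; exact mem_suppF.mpr (hyi j)⟩
    have h1 : n ≤ (R.biUnion (fun i => suppF (y i))).card := by
      have := Finset.card_le_card hsub
      rwa [Finset.card_univ, Fintype.card_fin] at this
    have h2 : (R.biUnion (fun i => suppF (y i))).card ≤ ∑ i ∈ R, (suppF (y i)).card :=
      Finset.card_biUnion_le
    have h3 : ∑ i ∈ R, (suppF (y i)).card = 3 * R.card := by
      rw [Finset.sum_congr rfl (fun i _ => by rw [← wt_eq_card_suppF, hyw3 i])]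
      rw [Finset.sum_const, smul_eq_mul]
      ring
    omega
  -- local dual words span
  have hindloc : LinearIndependent F (fun i : ↥R => y ↑i) := by
    rw [linearIndependent_iff']
    intro s g hsum i hi
    have := congrFun hsum (↑i : Fin n)
    rw [Finset.sum_apply] at this
    simp only [Pi.zero_apply] at this
    rw [Finset.sum_eq_single i] at this
    · have hyii : y (↑i : Fin n) ↑i ≠ 0 := hyi _
      simp only [Pi.smul_apply, smul_eq_mul] at this
      rcases mul_eq_zero.mp this with h | h
      · exact h
      · exact absurd h hyii
    · intro b _ hbi
      have hb' : (↑b : Fin n) ≠ ↑i := fun hc => hbi (Subtype.ext hc)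
      have hdisj := hdisjR _ b.2 _ i.2 hb'
      have : y (↑b : Fin n) ↑i = 0 := by
        by_contra hc
        exact absurd (Finset.disjoint_left.mp hdisj (mem_suppF.mpr hc)
          (mem_suppF.mpr (hyi ↑i))) (fun h => h)
      simp [this]
    · intro hc
      exact absurd hi hc
  set Dloc : Submodule F (Fin n → F) := Submodule.span F (Set.range (fun i : ↥R => y ↑i))
    with hDloc
  have hDlocD : Dloc ≤ dualCode C := by
    rw [hDloc, Submodule.span_le]
    rintro v ⟨i, rfl⟩
    exact hyD ↑i
  have hDlocrank : finrank F Dloc = R.card := by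
    rw [hDloc, finrank_span_eq_card hindloc, Fintype.card_coe]
  set D : Submodule F (Fin n → F) := dualCode C with hD
  have hfD : finrank F D = L + 4 := by
    rw [hD, finrank_dualCode, hdim]
    omega
  -- complement of Dloc inside D
  obtain ⟨qc, hqc⟩ := Submodule.exists_isCompl (Submodule.comap D.subtype Dloc)
  have hcomaprank : finrank F (Submodule.comap D.subtype Dloc) = R.card := by
    rw [(Submodule.comapSubtypeEquivOfLe hDlocD).finrank_eq, hDlocrank]
  have hqcrank : finrank F qc ≤ 4 := by
    have := Submodule.finrank_add_eq_of_isCompl hqc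
    rw [hcomaprank, hfD] at this
    omega
  set m4 : ℕ := finrank F qc with hm4
  haveI : Module.Free F ↥qc := Module.Free.of_divisionRing F ↥qc
  set bE : Basis (Fin m4) F qc := Module.finBasis F qc with hbE
  set e : Fin 4 → (Fin n → F) :=
    fun a => if h : (a : ℕ) < m4 then (((bE ⟨a, h⟩ : qc) : D) : Fin n → F) else 0 with he
  set Ψ : (Fin n → F) →ₗ[F] (Fin 4 → F) := LinearMap.pi (fun a => Bf.flip (e a)) with hΨ
  have hΨapply : ∀ x a, Ψ x a = Bf x (e a) := fun x a => rfl
  -- x orthogonal to all local words and all e's is a codeword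
  have hΨC : ∀ x : Fin n → F, (∀ r ∈ R, Bf (y r) x = 0) → Ψ x = 0 → x ∈ C := by
    intro x hloc hpsi
    rw [← dualCode_dualCode C]
    intro u hu
    show ∑ i, u i * x i = 0
    have hBf : Bf u x = 0 := by
      set ud : ↥D := ⟨u, hu⟩ with hud
      have htop : ud ∈ (⊤ : Submodule F ↥D) := trivial
      rw [← hqc.sup_eq_top] at htop
      obtain ⟨a, ha, b, hb, hab⟩ := Submodule.mem_sup.mp htop
      have hu_eq : u = (↑a : Fin n → F) + ↑b := by
        have := congrArg (fun w : ↥D => (w : Fin n → F)) hab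
        simpa using this.symm
      have hBa : Bf (↑a : Fin n → F) x = 0 := by
        have haDloc : (↑a : Fin n → F) ∈ Dloc := Submodule.mem_comap.mp ha
        have hker : Dloc ≤ LinearMap.ker (Bf.flip x) := by
          rw [hDloc, Submodule.span_le]
          rintro v ⟨i, rfl⟩
          exact LinearMap.mem_ker.mpr (hloc ↑i i.2)
        exact LinearMap.mem_ker.mp (hker haDloc)
      have hBb : Bf (↑b : Fin n → F) x = 0 := by
        set bq : ↥qc := ⟨b, hb⟩ with hbq
        set φ : ↥qc →ₗ[F] F := (Bf.flip x).comp (D.subtype.comp qc.subtype) with hφ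
        have hφval : φ bq = Bf (↑b : Fin n → F) x := rfl
        have hφbasis : ∀ j : Fin m4, φ (bE j) = 0 := by
          intro j
          have hj4 : (j : ℕ) < 4 := lt_of_lt_of_le j.isLt hqcrank
          have hpsia := congrFun hpsi ⟨j, hj4⟩
          rw [hΨapply] at hpsia
          simp only [Pi.zero_apply] at hpsia
          have hea : e ⟨j, hj4⟩ = ((bE j : qc) : D) := by
            simp only [he]
            exact dif_pos j.isLt
          have : Bf (((bE j : qc) : D) : Fin n → F) x = 0 := by
            rw [← hea]
            rw [← Bf_symm]
            exact hpsia
          exact this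
        have hsr := Basis.sum_repr bE bq
        have hφsum : φ bq = ∑ j, (bE.repr bq) j • φ (bE j) := by
          conv_lhs => rw [← hsr]
          rw [map_sum]
          congr 1
          funext j
          rw [map_smul]
        have hzero : φ bq = 0 := by
          rw [hφsum]
          exact Finset.sum_eq_zero (fun j _ => by rw [hφbasis j, smul_zero])
        rw [← hφval]
        exact hzero
      rw [hu_eq, map_add]
      simp only [LinearMap.add_apply]
      rw [hBa, hBb, add_zero]
    rw [← hBf, Bf_apply]
  -- groups and pair vectors
  have hVmem : ∀ (x : Fin n → F) (i : Fin n), suppF x ⊆ G i → Bf (z i) x = 0 →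
      ∀ r ∈ R, Bf (y r) x = 0 := by
    intro x i hsupp hz0 r hr
    by_cases hri : r = rep i
    · rw [hri]
      exact hz0
    · apply Bf_eq_zero_of_disjoint
      intro j
      by_contra hcon
      push_neg at hcon
      have hj1 : j ∈ suppF (y r) := mem_suppF.mpr hcon.1
      have hj2 : j ∈ G i := hsupp (mem_suppF.mpr hcon.2)
      exact Finset.disjoint_left.mp (hdisjR r hr (rep i) (hrepR i) hri) hj1 hj2
  have h2card : ∀ i, ((G i).erase i).card = 2 := by
    intro i
    rw [Finset.card_erase_of_mem (hGi i), hGcard i]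
  have hpairex : ∀ i, ∃ s t : Fin n, s ≠ t ∧ (G i).erase i = {s, t} :=
    fun i => Finset.card_eq_two.mp (h2card i)
  choose sf tf hst hGe using hpairex
  have hsf_mem : ∀ i, sf i ∈ (G i).erase i := by
    intro i; rw [hGe i]; simp
  have htf_mem : ∀ i, tf i ∈ (G i).erase i := by
    intro i; rw [hGe i]; simp
  have hsfG : ∀ i, sf i ∈ G i := fun i => Finset.mem_of_mem_erase (hsf_mem i)
  have htfG : ∀ i, tf i ∈ G i := fun i => Finset.mem_of_mem_erase (htf_mem i)
  have hsfne : ∀ i, sf i ≠ i := fun i => Finset.ne_of_mem_erase (hsf_mem i)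
  have htfne : ∀ i, tf i ≠ i := fun i => Finset.ne_of_mem_erase (htf_mem i)
  set xv : Fin n → (Fin n → F) := fun i => pairVec (z i) (sf i) (tf i) with hxvdef
  have hxv_supp : ∀ i, suppF (xv i) ⊆ (G i).erase i := by
    intro i
    rw [hGe i]
    exact pairVec_suppF
  have hxv_suppG : ∀ i, suppF (xv i) ⊆ G i :=
    fun i => (hxv_supp i).trans (Finset.erase_subset _ _)
  have hxv_i : ∀ i, xv i i = 0 :=
    fun i => pairVec_other (fun hc => hsfne i hc.symm) (fun hc => htfne i hc.symm)
  have hxv_s : ∀ i, xv i (sf i) ≠ 0 := by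
    intro i
    rw [show xv i (sf i) = z i (tf i) from pairVec_s]
    exact (hGz i (tf i)).mpr (htfG i)
  have hxv_t : ∀ i, xv i (tf i) ≠ 0 := by
    intro i
    rw [show xv i (tf i) = -(z i (sf i)) from pairVec_t (hst i)]
    exact neg_ne_zero.mpr ((hGz i (sf i)).mpr (hsfG i))
  have hxvV : ∀ i, ∀ r ∈ R, Bf (y r) (xv i) = 0 :=
    fun i => hVmem (xv i) i (hxv_suppG i) (Bf_pairVec (hst i))
  -- the distinguished group
  have hRne : R.Nonempty := Finset.card_pos.mp (by omega)
  obtain ⟨r₁, hr₁⟩ := hRne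
  set G₁ : Finset (Fin n) := G r₁ with hG₁def
  set z₁ : Fin n → F := z r₁ with hz₁def
  set VG1 : Submodule F (Fin n → F) := coordSub G₁ ⊓ LinearMap.ker (Bf z₁) with hVG1def
  have hVG1supp : ∀ yb ∈ VG1, suppF yb ⊆ G₁ :=
    fun yb hyb => suppF_subset_iff_mem_coordSub.mp (Submodule.mem_inf.mp hyb).1
  have hVG1cond : ∀ yb ∈ VG1, ∀ r ∈ R, Bf (y r) yb = 0 := by
    intro yb hyb
    exact hVmem yb r₁ (hVG1supp yb hyb) (LinearMap.mem_ker.mp (Submodule.mem_inf.mp hyb).2)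
  set U₁ : Submodule F (Fin 4 → F) := Submodule.map Ψ VG1 with hU₁def
  have hkey : ∀ v : Fin n → F, (∀ r ∈ R, Bf (y r) v = 0) → Ψ v ∈ U₁ →
      ∃ yb ∈ VG1, v - yb ∈ C := by
    intro v hv hU
    obtain ⟨yb, hyb, hΨyb⟩ := Submodule.mem_map.mp hU
    refine ⟨yb, hyb, hΨC _ ?_ ?_⟩
    · intro r hr
      rw [map_sub, hv r hr, hVG1cond yb hyb r hr, sub_zero]
    · rw [map_sub, hΨyb, sub_self]
  -- disjointness from the distinguished group
  have hdisjG1 : ∀ i, i ∉ G₁ → Disjoint (G i) G₁ := by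
    intro i hi
    apply hGdisj i r₁
    intro hc
    exact hi (by rw [hG₁def, ← hGeq i r₁ hc]; exact hGi i)
  -- nonvanishing in the quotient
  set Qs := ((Fin 4 → F) ⧸ U₁) with hQsdef
  have hne0 : ∀ i, i ∉ G₁ → (Submodule.Quotient.mk (Ψ (xv i)) : Qs) ≠ 0 := by
    intro i hi h0
    rw [Submodule.Quotient.mk_eq_zero] at h0
    obtain ⟨yb, hyb, hcC⟩ := hkey (xv i) (hxvV i) h0
    have hsupp : suppF (xv i - yb) ⊆ (G i).erase i ∪ G₁ :=
      (suppF_sub_subset _ _).trans (Finset.union_subset_union (hxv_supp i) (hVG1supp yb hyb))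
    have hwt : wt (xv i - yb) ≤ 5 := by
      rw [wt_eq_card_suppF]
      calc (suppF (xv i - yb)).card ≤ ((G i).erase i ∪ G₁).card := Finset.card_le_card hsupp
        _ ≤ ((G i).erase i).card + G₁.card := Finset.card_union_le _ _
        _ ≤ 5 := by rw [h2card i, hG₁def, hGcard r₁]
    have hc0 : xv i - yb = 0 := by
      by_contra hcne
      have := hmin _ hcC hcne
      omega
    have hxveq : xv i = yb := sub_eq_zero.mp hc0
    have hsfG1 : sf i ∉ G₁ := Finset.disjoint_left.mp (hdisjG1 i hi) (hsfG i)
    have : yb (sf i) = 0 := (Submodule.mem_inf.mp hyb).1 (sf i) hsfG1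
    rw [← hxveq] at this
    exact hxv_s i this
  -- injectivity property
  have hinjkey : ∀ i j, i ∉ G₁ → j ∉ G₁ → ∀ α : F, α ≠ 0 →
      Ψ (xv j) - α • Ψ (xv i) ∈ U₁ → i = j := by
    intro i j hi hj α hα hU
    have hvcond : ∀ r ∈ R, Bf (y r) (xv j - α • xv i) = 0 := by
      intro r hr
      rw [map_sub, map_smul, hxvV j r hr, hxvV i r hr, smul_zero, sub_zero]
    have hΨmem : Ψ (xv j - α • xv i) ∈ U₁ := by
      rw [map_sub, map_smul]
      exact hU
    obtain ⟨yb, hyb, hcC⟩ := hkey _ hvcond hΨmem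
    have hsupp : suppF (xv j - α • xv i - yb) ⊆
        ((G j).erase j ∪ (G i).erase i) ∪ G₁ := by
      refine (suppF_sub_subset _ _).trans (Finset.union_subset_union ?_ (hVG1supp yb hyb))
      refine (suppF_sub_subset _ _).trans (Finset.union_subset_union (hxv_supp j) ?_)
      exact (suppF_smul_subset α _).trans (hxv_supp i)
    have hwt : wt (xv j - α • xv i - yb) ≤ 7 := by
      rw [wt_eq_card_suppF]
      calc (suppF (xv j - α • xv i - yb)).card
          ≤ (((G j).erase j ∪ (G i).erase i) ∪ G₁).card := Finset.card_le_card hsupp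
        _ ≤ ((G j).erase j ∪ (G i).erase i).card + G₁.card := Finset.card_union_le _ _
        _ ≤ (((G j).erase j).card + ((G i).erase i).card) + G₁.card := by
            have := Finset.card_union_le ((G j).erase j) ((G i).erase i)
            omega
        _ ≤ 7 := by rw [h2card i, h2card j, hG₁def, hGcard r₁]
    have hc0 : xv j - α • xv i - yb = 0 := by
      by_contra hcne
      have := hmin _ hcC hcne
      omega
    have heval : ∀ p, xv j p - α * xv i p - yb p = 0 := by
      intro p
      have := congrFun hc0 p
      simpa using this
    by_contra hne
    by_cases hrr : rep i = rep j
    · have hGij : G i = G j := hGeq i j hrr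
      have hiGj : i ∈ (G j).erase j := Finset.mem_erase.mpr ⟨hne, by rw [← hGij]; exact hGi i⟩
      have hybi : yb i = 0 := (Submodule.mem_inf.mp hyb).1 i hi
      have := heval i
      rw [hxv_i i, mul_zero, hybi, sub_zero, sub_zero] at this
      rw [hGe j] at hiGj
      rcases Finset.mem_insert.mp hiGj with h | h
      · rw [h] at this
        exact hxv_s j this
      · rw [Finset.mem_singleton.mp h] at this
        exact hxv_t j this
    · have hdisjij : Disjoint (G i) (G j) := hGdisj i j hrr
      have hsfj_i : xv i (sf j) = 0 := by
        rw [← not_mem_suppF] at *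
        intro hc
        exact Finset.disjoint_left.mp hdisjij (hxv_suppG i hc) (hsfG j)
      have hsfj_G1 : sf j ∉ G₁ := Finset.disjoint_left.mp (hdisjG1 j hj) (hsfG j)
      have hybsfj : yb (sf j) = 0 := (Submodule.mem_inf.mp hyb).1 (sf j) hsfj_G1
      have := heval (sf j)
      rw [hsfj_i, mul_zero, hybsfj, sub_zero, sub_zero] at this
      exact hxv_s j this
  -- lower bound on the rank of U₁
  obtain ⟨a₁, b₁, c₁, hab, hac, hbc, hG₁eq⟩ := Finset.card_eq_three.mp
    (show G₁.card = 3 by rw [hG₁def]; exact hGcard r₁)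
  have ha₁ : a₁ ∈ G₁ := by rw [hG₁eq]; simp
  have hb₁ : b₁ ∈ G₁ := by rw [hG₁eq]; simp
  have hc₁ : c₁ ∈ G₁ := by rw [hG₁eq]; simp
  have hz₁ne : ∀ p ∈ G₁, z₁ p ≠ 0 := by
    intro p hp
    exact (hGz r₁ p).mpr (by rw [← hG₁def]; exact hp)
  set xa : Fin n → F := pairVec z₁ b₁ c₁ with hxadef
  set xb : Fin n → F := pairVec z₁ a₁ c₁ with hxbdef
  have hxaVG1 : xa ∈ VG1 := by
    rw [hVG1def]
    refine Submodule.mem_inf.mpr ⟨?_, LinearMap.mem_ker.mpr (Bf_pairVec hbc)⟩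
    intro p hp
    refine pairVec_other (fun hc => hp ?_) (fun hc => hp ?_)
    · rw [hc]; exact hb₁
    · rw [hc]; exact hc₁
  have hxbVG1 : xb ∈ VG1 := by
    rw [hVG1def]
    refine Submodule.mem_inf.mpr ⟨?_, LinearMap.mem_ker.mpr (Bf_pairVec hac)⟩
    intro p hp
    refine pairVec_other (fun hc => hp ?_) (fun hc => hp ?_)
    · rw [hc]; exact ha₁
    · rw [hc]; exact hc₁
  have hindpair : LinearIndependent F ![Ψ xa, Ψ xb] := by
    rw [LinearIndependent.pair_iff]
    intro α β hsum
    have hvmem : α • xa + β • xb ∈ VG1 :=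
      Submodule.add_mem _ (Submodule.smul_mem _ _ hxaVG1) (Submodule.smul_mem _ _ hxbVG1)
    have hvC : α • xa + β • xb ∈ C := by
      apply hΨC
      · exact fun r hr => hVG1cond _ hvmem r hr
      · rw [map_add, map_smul, map_smul, hsum]
    have hwt : wt (α • xa + β • xb) ≤ 3 := by
      rw [wt_eq_card_suppF]
      have : suppF (α • xa + β • xb) ⊆ G₁ := hVG1supp _ hvmem
      calc (suppF (α • xa + β • xb)).card ≤ G₁.card := Finset.card_le_card this
        _ = 3 := by rw [hG₁def]; exact hGcard r₁
    have hv0 : α • xa + β • xb = 0 := by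
      by_contra hcne
      have := hmin _ hvC hcne
      omega
    have hevala := congrFun hv0 a₁
    have hevalb := congrFun hv0 b₁
    simp only [Pi.add_apply, Pi.smul_apply, smul_eq_mul, Pi.zero_apply] at hevala hevalb
    have hxa_a : xa a₁ = 0 := pairVec_other hab hac
    have hxb_a : xb a₁ = z₁ c₁ := pairVec_s
    have hxa_b : xa b₁ = z₁ c₁ := pairVec_s
    have hxb_b : xb b₁ = 0 := pairVec_other (fun hc => hab hc.symm) hbc
    rw [hxa_a, hxb_a, mul_zero, zero_add] at hevala
    rw [hxa_b, hxb_b, mul_zero, add_zero] at hevalb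
    have hβ : β = 0 := by
      rcases mul_eq_zero.mp hevala with h | h
      · exact h
      · exact absurd h (hz₁ne c₁ hc₁)
    have hα : α = 0 := by
      rcases mul_eq_zero.mp hevalb with h | h
      · exact h
      · exact absurd h (hz₁ne c₁ hc₁)
    exact ⟨hα, hβ⟩
  have hU₁rank : 2 ≤ finrank F U₁ := by
    have hspan : Submodule.span F (Set.range ![Ψ xa, Ψ xb]) ≤ U₁ := by
      rw [Submodule.span_le]
      rintro v ⟨idx, rfl⟩
      fin_cases idx
      · exact Submodule.mem_map_of_mem hxaVG1
      · exact Submodule.mem_map_of_mem hxbVG1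
    have := finrank_span_eq_card hindpair
    rw [Fintype.card_fin] at this
    calc 2 = finrank F (Submodule.span F (Set.range ![Ψ xa, Ψ xb])) := this.symm
      _ ≤ finrank F U₁ := Submodule.finrank_mono hspan
  have hQsrank : finrank F Qs ≤ 2 := by
    have h4 : finrank F (Fin 4 → F) = 4 := by
      rw [Module.finrank_fintype_fun_eq_card, Fintype.card_fin]
    have h5 := Submodule.finrank_quotient_add_finrank U₁
    rw [h4] at h5
    show finrank F ((Fin 4 → F) ⧸ U₁) ≤ 2
    omega
  -- embed the quotient into F²
  haveI : Module.Free F Qs := Module.Free.of_divisionRing F Qs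
  set mQ : ℕ := finrank F Qs with hmQ
  set bQ : Basis (Fin mQ) F Qs := Module.finBasis F Qs with hbQ
  set ι : Qs →ₗ[F] (Fin 2 → F) := LinearMap.pi
    (fun k => if h : (k : ℕ) < mQ then (Finsupp.lapply ⟨k, h⟩).comp bQ.repr.toLinearMap
      else 0) with hι
  have hι0 : ∀ x : Qs, ι x = 0 → x = 0 := by
    intro x hx
    have hrepr : ∀ j : Fin mQ, bQ.repr x j = 0 := by
      intro j
      have hj2 : (j : ℕ) < 2 := lt_of_lt_of_le j.isLt hQsrank
      have hcf := congrFun hx (⟨j, hj2⟩ : Fin 2)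
      rw [hι] at hcf
      simp only [LinearMap.pi_apply, Pi.zero_apply] at hcf
      rw [dif_pos (show ((⟨(j : ℕ), hj2⟩ : Fin 2) : ℕ) < mQ from j.isLt)] at hcf
      exact hcf
    have : bQ.repr x = 0 := Finsupp.ext hrepr
    exact (Basis.repr bQ).map_eq_zero_iff.mp this
  -- the injection into the projective line
  set fmap : {i : Fin n // i ∉ G₁} → Option F :=
    fun ip => ratio (ι (Submodule.Quotient.mk (Ψ (xv ip.1)))) with hfmap
  have hfinj : Function.Injective fmap := by
    rintro ⟨i, hi⟩ ⟨j, hj⟩ heq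
    have hzi : ι (Submodule.Quotient.mk (Ψ (xv i))) ≠ 0 := by
      intro h0
      exact hne0 i hi (hι0 _ h0)
    have hzj : ι (Submodule.Quotient.mk (Ψ (xv j))) ≠ 0 := by
      intro h0
      exact hne0 j hj (hι0 _ h0)
    obtain ⟨α, hα, heqv⟩ := ratio_prop hzi hzj heq
    have : ι ((Submodule.Quotient.mk (Ψ (xv j)) : Qs) - α • Submodule.Quotient.mk (Ψ (xv i)))
        = 0 := by
      rw [map_sub, map_smul, heqv, sub_self]
    have hq0 := hι0 _ this
    rw [sub_eq_zero] at hq0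
    have : (Submodule.Quotient.mk (Ψ (xv j) - α • Ψ (xv i)) : Qs) = 0 := by
      rw [Submodule.Quotient.mk_sub, Submodule.Quotient.mk_smul, hq0, sub_self]
    rw [Submodule.Quotient.mk_eq_zero] at this
    exact Subtype.ext (hinjkey i j hi hj α hα this)
  have hcard1 : Fintype.card {i : Fin n // i ∉ G₁} ≤ Fintype.card (Option F) :=
    Fintype.card_le_of_injective fmap hfinj
  rw [Fintype.card_option, hq] at hcard1
  have hcard2 : Fintype.card {i : Fin n // i ∉ G₁} = n - 3 := by
    rw [Fintype.card_subtype_compl, Fintype.card_fin]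
    have : Fintype.card {i : Fin n // i ∈ G₁} = G₁.card := Fintype.card_coe G₁
    rw [this, hG₁def, hGcard r₁]
  rw [hcard2] at hcard1
  exact absurd hcard1 (by omega)


end Cor1

/-- **Corollary 1.** Let `q` be a prime power (the cardinality of a finite field `F`),
`L ≥ 4` an integer, and `C` an `(n,k,d,r)_q` LRC with locality `r = 2`, length `n = 3L`
satisfying `n > q + 4`, and dimension `k = 2(L−2)`. Then the minimum distance of `C`
satisfies `d ≤ 7`. -/
theorem corollary1_dist_le_seven
    (F : Type*) [Field F] [Fintype F] [DecidableEq F] (q : ℕ) (hq : Fintype.card F = q)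
    (L : ℕ) (hL : 4 ≤ L) (n k d : ℕ)
    (hn : n = 3 * L) (hngt : n > q + 4) (hk : k = 2 * (L - 2))
    (C : Submodule F (Fin n → F))
    (hdim : Module.finrank F C = k)
    (hdist : IsMinDist C d)
    (hloc : HasLocality C 2) :
    d ≤ 7 := by
  classical
  open Cor1 in
  by_contra hd
  push_neg at hd
  have hmin : ∀ c ∈ C, c ≠ 0 → 8 ≤ wt c := by
    intro c hc h0
    have := hdist.2 c hc h0
    omega
  choose y hyD hyw hyi using hloc
  have hdim' : Module.finrank F C = 2 * (L - 2) := by rw [hdim, hk]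
  have hyne : ∀ i, y i ≠ 0 := by
    intro i hc
    exact hyi i (by rw [hc]; rfl)
  by_cases hA : ∀ i, wt (y i) = 3
  · by_cases hB : ∀ i j, suppF (y i) = suppF (y j) ∨ Disjoint (suppF (y i)) (suppF (y j))
    · exact partition_contra hq C hL hn hngt hdim' y hyD hA hyi hB hmin
    · push_neg at hB
      obtain ⟨i, j, hne, hndisj⟩ := hB
      have hyij : y i ≠ y j := fun hc => hne (by rw [hc])
      have hsingle : LinearIndependent F
          ((↑) : ↥(({y j} : Finset (Fin n → F)) : Set (Fin n → F)) → (Fin n → F)) := by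
        rw [Finset.coe_singleton]
        exact LinearIndepOn.singleton (v := id) (hyne j)
      have hnotspan : y i ∉ Submodule.span F ({y j} : Set (Fin n → F)) := by
        intro hmem
        obtain ⟨a, ha⟩ := Submodule.mem_span_singleton.mp hmem
        by_cases ha0 : a = 0
        · rw [ha0, zero_smul] at ha
          exact hyne i ha.symm
        · apply hne
          rw [← ha, suppF_smul ha0]
      have hind : LinearIndependent F
          ((↑) : ↥(({y i, y j} : Finset (Fin n → F)) : Set (Fin n → F)) → (Fin n → F)) := by
        rw [Finset.coe_insert]
        exact LinearIndepOn.id_insert hsingle (by rwa [Finset.coe_singleton])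
      have hScard : ({y i, y j} : Finset (Fin n → F)).card = 2 := by
        rw [Finset.card_insert_of_notMem (by simpa using hyij), Finset.card_singleton]
      have hUcard : (suppF (y i) ∪ suppF (y j)).card + 1 ≤ 6 := by
        have h1 := Finset.card_union_add_card_inter (suppF (y i)) (suppF (y j))
        have h2 : 1 ≤ (suppF (y i) ∩ suppF (y j)).card :=
          Finset.card_pos.mpr (Finset.not_disjoint_iff_nonempty_inter.mp hndisj)
        have h3 : (suppF (y i)).card = 3 := by rw [← wt_eq_card_suppF]; exact hA i
        have h4 : (suppF (y j)).card = 3 := by rw [← wt_eq_card_suppF]; exact hA j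
        omega
      obtain ⟨c, hcC, hc0, hcwt⟩ := nonpartition_codeword C hL hn hdim' y hyD
        (fun i => le_of_eq (hA i)) hyi {y i, y j} (suppF (y i) ∪ suppF (y j)) hind
        (by
          intro v hv
          rcases Finset.mem_insert.mp hv with rfl | hv
          · exact hyD i
          · rw [Finset.mem_singleton.mp hv]; exact hyD j)
        (by
          intro v hv
          rcases Finset.mem_insert.mp hv with rfl | hv
          · exact Finset.subset_union_left
          · rw [Finset.mem_singleton.mp hv]; exact Finset.subset_union_right)
        (by omega) (by omega) (by omega)
      have := hmin c hcC hc0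
      omega
  · push_neg at hA
    obtain ⟨i, hi⟩ := hA
    have hw2 : wt (y i) ≤ 2 := by
      have := hyw i
      omega
    have hind : LinearIndependent F
        ((↑) : ↥(({y i} : Finset (Fin n → F)) : Set (Fin n → F)) → (Fin n → F)) := by
      rw [Finset.coe_singleton]
      exact LinearIndepOn.singleton (v := id) (hyne i)
    obtain ⟨c, hcC, hc0, hcwt⟩ := nonpartition_codeword C hL hn hdim' y hyD hyw hyi
      {y i} (suppF (y i)) hind
      (by intro v hv; rw [Finset.mem_singleton.mp hv]; exact hyD i)
      (by intro v hv; rw [Finset.mem_singleton.mp hv])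
      (by rw [Finset.card_singleton]) (by rw [Finset.card_singleton]; omega)
      (by rw [Finset.card_singleton, ← wt_eq_card_suppF]; omega)
    have := hmin c hcC hc0
    omega
end

section
/- (Lemma 3) Let q be a prime power and let C be an LRC over F_q with disjoint local repair groups, locality r, length n = L(r+1) (so L is the number of local repair groups), dimension k, and minimum distance d ≥ 7. Then k ≤ rn/(r+1) − ⌈log_q( q + (q−1)·q·(rn/2 − r) )⌉. -/
variable {F : Type*} [Field F] [DecidableEq F] {n : ℕ}

def lfun (w : Fin n → F) : (Fin n → F) →ₗ[F] F where
  toFun x := ∑ i, w i * x i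
  map_add' x y := by simp [mul_add, Finset.sum_add_distrib]
  map_smul' c x := by simp [Finset.mul_sum, mul_left_comm]

lemma lfun_apply (w x : Fin n → F) : lfun w x = ∑ i, w i * x i := rfl

lemma lfun_single (w : Fin n → F) (m : Fin n) (t : F) :
    lfun w (Pi.single m t) = w m * t := by
  rw [lfun_apply, Finset.sum_eq_single m]
  · simp
  · intro b _ hb; rw [Pi.single_eq_of_ne hb, mul_zero]
  · simp

lemma wt_le_card_of_support {x : Fin n → F} {s : Finset (Fin n)}
    (h : ∀ i, x i ≠ 0 → i ∈ s) : wt x ≤ s.card :=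
  Finset.card_le_card (fun i hi => h i (Finset.mem_filter.mp hi).2)

set_option maxHeartbeats 1000000 in
/-- **Lemma 3.** Let `q` be a prime power (the cardinality of a finite field `F`) and `C` an
LRC over `F` with disjoint local repair groups, locality `r`, length `n = L(r+1)`, dimension
`k`, and minimum distance `d ≥ 7`. Then
`k ≤ rn/(r+1) − ⌈log_q( q + (q−1)·q·(rn/2 − r) )⌉`,
where `⌈log_q m⌉` (i.e. `Nat.clog q m`) is the least integer `e` with `q^e ≥ m`. -/
theorem lemma3_dimension_bound
    (F : Type*) [Field F] [Fintype F] [DecidableEq F] (q : ℕ) (hq : Fintype.card F = q)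
    (L r : ℕ) (hL : 0 < L) (hr : 0 < r) (n k d : ℕ)
    (hn : n = L * (r + 1)) (hk : 1 ≤ k) (hd : 7 ≤ d)
    (C : Submodule F (Fin n → F))
    (hdim : Module.finrank F C = k)
    (hdist : IsMinDist C d)
    (hloc : HasLocality C r)
    (hdis : HasDisjointLRG C r) :
    (k : ℤ) ≤ (L : ℤ) * r - Nat.clog q (q + (q - 1) * q * (r * n / 2 - r)) := by
  classical
  subst hq
  obtain ⟨P, hPcard, hPuniq, hPdual⟩ := hdis
  -- the group of each coordinate
  choose grp hgrp1 hgrp2 using fun i => (hPuniq i).exists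
  have grp_unique : ∀ (i : Fin n) (G : Finset (Fin n)), G ∈ P → i ∈ G → G = grp i :=
    fun i G hG hiG => (hPuniq i).unique ⟨hG, hiG⟩ ⟨hgrp1 i, hgrp2 i⟩
  have hdisjGroups : ∀ (G G' : Finset (Fin n)), G ∈ P → G' ∈ P → G ≠ G' →
      ∀ i ∈ G, i ∉ G' := by
    intro G G' hG hG' hne i hiG hiG'
    exact hne ((grp_unique i G hG hiG).trans (grp_unique i G' hG' hiG').symm)
  -- choice of dual vectors supported exactly on each group
  choose v hv1 hv2 using fun (G : {x // x ∈ P}) => hPdual G.1 G.2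
  set u : Fin n → (Fin n → F) := fun i => v ⟨grp i, hgrp1 i⟩ with hu
  -- the syndrome map of the local checks
  set Φ : (Fin n → F) →ₗ[F] ({x // x ∈ P} → F) :=
    LinearMap.pi (fun G => lfun (v G)) with hPhi
  set W : Submodule F (Fin n → F) := LinearMap.ker Φ with hW
  have hCW : C ≤ W := by
    intro x hx
    rw [hW, LinearMap.mem_ker]
    funext G
    rw [hPhi, LinearMap.pi_apply, lfun_apply, Pi.zero_apply]
    have : ∑ i, x i * v G i = 0 := hv1 G x hx
    rw [← this]
    exact Finset.sum_congr rfl (fun i _ => mul_comm _ _)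
  -- cardinality of P
  have hPcover : P.biUnion id = Finset.univ := by
    ext i
    simp only [Finset.mem_biUnion, id, Finset.mem_univ, iff_true]
    exact ⟨grp i, hgrp1 i, hgrp2 i⟩
  have hcardP : P.card * (r + 1) = n := by
    have hdb : (P.biUnion id).card = ∑ G ∈ P, (id G).card :=
      Finset.card_biUnion (fun G hG G' hG' hne =>
        Finset.disjoint_left.mpr (fun i hi hi' => hdisjGroups G G' hG hG' hne i hi hi'))
    rw [hPcover, Finset.card_univ, Fintype.card_fin] at hdb
    have h2 : ∑ G ∈ P, (id G).card = P.card * (r+1) :=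
      Finset.sum_const_nat (fun G hG => hPcard G hG)
    omega
  have hPL : P.card = L := Nat.eq_of_mul_eq_mul_right (show 0 < r + 1 by omega) (hcardP.trans hn)
  -- surjectivity of Φ
  have hsurj : Function.Surjective Φ := by
    intro t
    have hne : ∀ G : {x // x ∈ P}, (G.1).Nonempty := fun G =>
      Finset.card_pos.mp (by rw [hPcard G.1 G.2]; omega)
    choose idx hidx using hne
    refine ⟨∑ G : {x // x ∈ P}, (t G * (v G (idx G))⁻¹) • (Pi.single (idx G) (1:F) : Fin n → F), ?_⟩
    rw [map_sum]
    funext G'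
    rw [Finset.sum_apply]
    rw [Finset.sum_eq_single G']
    · have hvG' : v G' (idx G') ≠ 0 := (hv2 G' (idx G')).mpr (hidx G')
      rw [map_smul, hPhi]
      simp only [Pi.smul_apply, LinearMap.pi_apply, lfun_single, smul_eq_mul]
      field_simp
    · intro G _ hGG'
      have hz : v G' (idx G) = 0 := by
        by_contra h
        have : idx G ∈ G'.1 := (hv2 G' (idx G)).mp h
        exact hGG' (Subtype.ext ((grp_unique (idx G) G.1 G.2 (hidx G)).trans
          (grp_unique (idx G) G'.1 G'.2 this).symm))
      rw [map_smul, hPhi]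
      simp only [Pi.smul_apply, LinearMap.pi_apply, lfun_single, smul_eq_mul, hz]
      ring
    · intro h; exact absurd (Finset.mem_univ G') h
  -- base group and two coordinates in it
  have hn2 : 2 ≤ n := by
    have := Nat.mul_le_mul hL (show 2 ≤ r + 1 by omega)
    omega
  have hPne : P.Nonempty := Finset.card_pos.mp (by omega)
  obtain ⟨G1, hG1⟩ := hPne
  obtain ⟨i0, hi0, i1, hi1, hne01⟩ := Finset.one_lt_card.mp
    (show 1 < G1.card by rw [hPcard G1 hG1]; omega)
  have hgrpi0 : grp i0 = G1 := (grp_unique i0 G1 hG1 hi0).symm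
  -- the two-point parity vectors
  set w : Fin n × Fin n → (Fin n → F) := fun p =>
    Pi.single p.1 (1:F) + Pi.single p.2 (-(u p.1 p.1) / (u p.1 p.2)) with hwdef
  have wspec : ∀ i j : Fin n, i ≠ j → j ∈ grp i →
      (w (i,j)) i = 1 ∧ (w (i,j)) j ≠ 0 ∧ (∀ m, m ≠ i → m ≠ j → w (i,j) m = 0) ∧
        w (i,j) ∈ W := by
    intro i j hij hj
    have h1 : u i i ≠ 0 := (hv2 ⟨grp i, hgrp1 i⟩ i).mpr (hgrp2 i)
    have h2 : u i j ≠ 0 := (hv2 ⟨grp i, hgrp1 i⟩ j).mpr hj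
    refine ⟨?_, ?_, ?_, ?_⟩
    · simp [hwdef, Pi.single_eq_of_ne hij, Pi.single_eq_same]
    · simp only [hwdef, Pi.add_apply, Pi.single_eq_same,
        Pi.single_eq_of_ne (Ne.symm hij), zero_add]
      exact div_ne_zero (neg_ne_zero.mpr h1) h2
    · intro m hmi hmj
      simp [hwdef, Pi.single_eq_of_ne hmi, Pi.single_eq_of_ne hmj]
    · rw [hW, LinearMap.mem_ker]
      funext G'
      rw [hPhi, LinearMap.pi_apply, Pi.zero_apply, hwdef]
      simp only [map_add, lfun_single]
      by_cases hG : G' = ⟨grp i, hgrp1 i⟩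
      · subst hG
        show u i i * 1 + u i j * (-(u i i) / u i j) = 0
        field_simp
        ring
      · have hzi : v G' i = 0 := by
          by_contra h
          exact hG (Subtype.ext (((grp_unique i G'.1 G'.2 ((hv2 G' i).mp h))).symm ▸ rfl))
        have hzj : v G' j = 0 := by
          by_contra h
          have h3 : G'.1 = grp j := grp_unique j G'.1 G'.2 ((hv2 G' j).mp h)
          have h4 : grp j = grp i := (grp_unique j (grp i) (hgrp1 i) hj).symm
          exact hG (Subtype.ext (h3.trans h4))
        rw [hzi, hzj]
        ring
  -- the set of ordered in-group pairs avoiding i0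
  set B : Finset (Fin n × Fin n) := P.biUnion (fun G => (G.erase i0).offDiag) with hBdef
  set K : Finset (Fin n × Fin n) := B.filter (fun p => p.1 < p.2) with hKdef
  have hBdisj : ∀ G ∈ P, ∀ G' ∈ P, G ≠ G' →
      Disjoint ((G.erase i0).offDiag) ((G'.erase i0).offDiag) := by
    intro G hG G' hG' hne
    refine Finset.disjoint_left.mpr (fun p hp hp' => ?_)
    have h1 := (Finset.mem_offDiag.mp hp).1
    have h2 := (Finset.mem_offDiag.mp hp').1
    exact hdisjGroups G G' hG hG' hne p.1 (Finset.mem_of_mem_erase h1)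
      (Finset.mem_of_mem_erase h2)
  have hcardB : B.card = r * n - 2 * r := by
    rw [hBdef, Finset.card_biUnion hBdisj]
    rw [← Finset.add_sum_erase _ _ hG1]
    have hterm1 : ((G1.erase i0).offDiag).card = r * r - r := by
      rw [Finset.offDiag_card, Finset.card_erase_of_mem hi0, hPcard G1 hG1]
      simp
    have hterm2 : ∀ G ∈ P.erase G1, ((G.erase i0).offDiag).card
        = (r+1) * (r+1) - (r+1) := by
      intro G hG
      have hGP := Finset.mem_of_mem_erase hG
      have hGne : G ≠ G1 := Finset.ne_of_mem_erase hG
      have : i0 ∉ G := hdisjGroups G1 G hG1 hGP (Ne.symm hGne) i0 hi0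
      rw [Finset.erase_eq_of_notMem this, Finset.offDiag_card, hPcard G hGP]
    rw [hterm1, Finset.sum_congr rfl hterm2, Finset.sum_const, smul_eq_mul,
      Finset.card_erase_of_mem hG1, hPL]
    have e1 : r ≤ r * r := Nat.le_mul_of_pos_left r hr
    have e2 : (r+1) ≤ (r+1) * (r+1) := Nat.le_mul_of_pos_left (r+1) (by omega)
    have e4 : 2 * r ≤ r * n := by
      calc 2 * r = r * 2 := by ring
      _ ≤ r * n := Nat.mul_le_mul_left r hn2
    zify [e1, e2, e4, hL]
    rw [hn]
    push_cast
    ring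
  have hcardK : K.card = r * n / 2 - r := by
    have hswap : (B.filter (fun p => p.2 < p.1)).card = K.card := by
      refine Finset.card_bij' (fun p _ => p.swap) (fun p _ => p.swap) ?_ ?_ ?_ ?_
      · intro p hp
        obtain ⟨hpB, hplt⟩ := Finset.mem_filter.mp hp
        obtain ⟨G, hG, hpG⟩ := Finset.mem_biUnion.mp hpB
        rw [Finset.mem_offDiag] at hpG
        exact Finset.mem_filter.mpr ⟨Finset.mem_biUnion.mpr
          ⟨G, hG, Finset.mem_offDiag.mpr ⟨hpG.2.1, hpG.1, Ne.symm hpG.2.2⟩⟩, hplt⟩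
      · intro p hp
        obtain ⟨hpB, hplt⟩ := Finset.mem_filter.mp hp
        obtain ⟨G, hG, hpG⟩ := Finset.mem_biUnion.mp hpB
        rw [Finset.mem_offDiag] at hpG
        exact Finset.mem_filter.mpr ⟨Finset.mem_biUnion.mpr
          ⟨G, hG, Finset.mem_offDiag.mpr ⟨hpG.2.1, hpG.1, Ne.symm hpG.2.2⟩⟩, hplt⟩
      · intro p _; exact Prod.swap_swap p
      · intro p _; exact Prod.swap_swap p
    have hfilt : B.filter (fun p => ¬ p.1 < p.2) = B.filter (fun p => p.2 < p.1) := by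
      refine Finset.filter_congr (fun p hp => ?_)
      have hne : p.1 ≠ p.2 := by
        obtain ⟨G, hG, hpG⟩ := Finset.mem_biUnion.mp hp
        exact (Finset.mem_offDiag.mp hpG).2.2
      constructor
      · intro h; exact (lt_or_gt_of_ne hne).resolve_left h
      · intro h; exact not_lt_of_gt h
    have hsum : K.card + (B.filter (fun p => ¬ p.1 < p.2)).card = B.card :=
      Finset.card_filter_add_card_filter_not _
    rw [hfilt, hswap] at hsum
    have e4 : 2 * r ≤ r * n := by
      calc 2 * r = r * 2 := by ring
      _ ≤ r * n := Nat.mul_le_mul_left r hn2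
    have key : ∀ N : ℕ, 2 * K.card = N - 2 * r → 2 * r ≤ N → K.card = N / 2 - r := by
      intro N hh1 hh2; omega
    exact key (r * n) (by omega) e4
  have hKspec : ∀ p : Fin n × Fin n, p ∈ K → p.1 ≠ p.2 ∧ p.1 ≠ i0 ∧ p.2 ≠ i0 ∧
      p.2 ∈ grp p.1 ∧ p.1 < p.2 := by
    intro p hp
    obtain ⟨hpB, hplt⟩ := Finset.mem_filter.mp hp
    obtain ⟨G, hG, hpG⟩ := Finset.mem_biUnion.mp hpB
    rw [Finset.mem_offDiag] at hpG
    obtain ⟨h1, h2, h3⟩ := hpG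
    have h1' := Finset.mem_erase.mp h1
    have h2' := Finset.mem_erase.mp h2
    have hGg : G = grp p.1 := grp_unique p.1 G hG h1'.2
    exact ⟨h3, h1'.1, h2'.1, hGg ▸ h2'.2, hplt⟩
  have hf := wspec i0 i1 hne01 (by rw [hgrpi0]; exact hi1)
  have hwK : ∀ p : Fin n × Fin n, p ∈ K → (w p) p.1 = 1 ∧ (w p) p.2 ≠ 0 ∧
      (∀ m, m ≠ p.1 → m ≠ p.2 → w p m = 0) ∧ w p ∈ W := by
    intro p hp
    obtain ⟨h1, _, _, h4, _⟩ := hKspec p hp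
    exact wspec p.1 p.2 h1 h4
  -- the injective family of vectors
  set pv : Option ({p // p ∈ K} × {b : F // b ≠ 0}) → (Fin n → F) :=
    fun o => o.elim 0 (fun pb => pb.2.1 • w pb.1.1) with hpvdef
  set esup : Option ({p // p ∈ K} × {b : F // b ≠ 0}) → Finset (Fin n) :=
    fun o => o.elim ∅ (fun pb => {pb.1.1.1, pb.1.1.2}) with hesupdef
  set g : F × Option ({p // p ∈ K} × {b : F // b ≠ 0}) → (Fin n → F) :=
    fun x => x.1 • w (i0, i1) + pv x.2 with hgdef
  have hpvW : ∀ o, pv o ∈ W := by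
    intro o
    cases o with
    | none => exact W.zero_mem
    | some pb => exact W.smul_mem _ ((hwK pb.1.1 pb.1.2).2.2.2)
  have hgW : ∀ x, g x ∈ W := fun x =>
    W.add_mem (W.smul_mem _ hf.2.2.2) (hpvW x.2)
  have hpv0 : ∀ o, ∀ m : Fin n, m ∉ esup o → pv o m = 0 := by
    intro o m hm
    cases o with
    | none => rfl
    | some pb =>
      simp only [hesupdef, Option.elim, Finset.mem_insert, Finset.mem_singleton, not_or] at hm
      show pb.2.1 • w pb.1.1 m = 0
      rw [(hwK pb.1.1 pb.1.2).2.2.1 m hm.1 hm.2, smul_zero]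
  have hesup2 : ∀ o, (esup o).card ≤ 2 := by
    intro o
    cases o with
    | none => simp [hesupdef]
    | some pb =>
      show ({pb.1.1.1, pb.1.1.2} : Finset (Fin n)).card ≤ 2
      exact (Finset.card_insert_le _ _).trans (by simp)
  have hpvi0 : ∀ o, pv o i0 = 0 := by
    intro o
    cases o with
    | none => rfl
    | some pb =>
      have hs := hKspec pb.1.1 pb.1.2
      show pb.2.1 • w pb.1.1 i0 = 0
      rw [(hwK pb.1.1 pb.1.2).2.2.1 i0 (Ne.symm hs.2.1) (Ne.symm hs.2.2.1), smul_zero]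
  have hgi0 : ∀ x, g x i0 = x.1 := by
    intro x
    show (x.1 • w (i0,i1) + pv x.2) i0 = x.1
    rw [Pi.add_apply, Pi.smul_apply, hf.1, smul_eq_mul, mul_one, hpvi0, add_zero]
  have hginj : Function.Injective g := by
    rintro ⟨a, o⟩ ⟨a', o'⟩ h
    have ha : a = a' := by
      have h0 : g (a, o) i0 = a := hgi0 (a, o)
      have h1 : g (a', o') i0 = a' := hgi0 (a', o')
      rw [h] at h0
      rw [h0] at h1
      exact h1
    subst ha
    have hee : pv o = pv o' := by
      have h' : a • w (i0,i1) + pv o = a • w (i0,i1) + pv o' := h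
      exact add_left_cancel h'
    congr 1
    cases o with
    | none =>
      cases o' with
      | none => rfl
      | some pb =>
        exfalso
        have hc := congrFun hee pb.1.1.1
        rw [show pv none = (0 : Fin n → F) from rfl, Pi.zero_apply] at hc
        have : pb.2.1 • w pb.1.1 pb.1.1.1 = pb.2.1 := by
          rw [(hwK pb.1.1 pb.1.2).1, smul_eq_mul, mul_one]
        rw [show pv (some pb) = pb.2.1 • w pb.1.1 from rfl, Pi.smul_apply, this] at hc
        exact pb.2.2 hc.symm
    | some pb =>
      cases o' with
      | none =>
        exfalso
        have hc := congrFun hee pb.1.1.1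
        rw [show pv none = (0 : Fin n → F) from rfl, Pi.zero_apply] at hc
        have : pb.2.1 • w pb.1.1 pb.1.1.1 = pb.2.1 := by
          rw [(hwK pb.1.1 pb.1.2).1, smul_eq_mul, mul_one]
        rw [show pv (some pb) = pb.2.1 • w pb.1.1 from rfl, Pi.smul_apply, this] at hc
        exact pb.2.2 hc
      | some pb' =>
        have hee' : pb.2.1 • w pb.1.1 = pb'.2.1 • w pb'.1.1 := hee
        have hs := hKspec pb.1.1 pb.1.2
        have hs' := hKspec pb'.1.1 pb'.1.2
        have hw1 := hwK pb.1.1 pb.1.2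
        have hw1' := hwK pb'.1.1 pb'.1.2
        have hmem1 : pb.1.1.1 = pb'.1.1.1 ∨ pb.1.1.1 = pb'.1.1.2 := by
          by_contra hcon
          push_neg at hcon
          have hc := congrFun hee' pb.1.1.1
          rw [Pi.smul_apply, Pi.smul_apply, hw1.1, smul_eq_mul, mul_one,
            hw1'.2.2.1 _ hcon.1 hcon.2, smul_zero] at hc
          exact pb.2.2 hc
        have hmem2 : pb.1.1.2 = pb'.1.1.1 ∨ pb.1.1.2 = pb'.1.1.2 := by
          by_contra hcon
          push_neg at hcon
          have hc := congrFun hee' pb.1.1.2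
          rw [Pi.smul_apply, Pi.smul_apply, hw1'.2.2.1 _ hcon.1 hcon.2, smul_zero,
            smul_eq_mul] at hc
          exact (mul_ne_zero pb.2.2 hw1.2.1) hc
        have hlt : pb.1.1.1 < pb.1.1.2 := hs.2.2.2.2
        have hlt' : pb'.1.1.1 < pb'.1.1.2 := hs'.2.2.2.2
        have hp11 : pb.1.1.1 = pb'.1.1.1 := by
          rcases hmem1 with h1 | h1
          · exact h1
          · exfalso
            rcases hmem2 with h2 | h2
            · rw [h1, h2] at hlt
              exact lt_asymm hlt hlt'
            · rw [h1, h2] at hlt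
              exact lt_irrefl _ hlt
        have hp12 : pb.1.1.2 = pb'.1.1.2 := by
          rcases hmem2 with h2 | h2
          · exfalso
            rw [hp11, h2] at hlt
            exact lt_irrefl _ hlt
          · exact h2
        have hpp : pb.1.1 = pb'.1.1 := Prod.ext hp11 hp12
        have hbb : pb.2.1 = pb'.2.1 := by
          have hc := congrFun hee' pb.1.1.1
          rw [Pi.smul_apply, Pi.smul_apply, hw1.1, smul_eq_mul, mul_one, hp11,
            hw1'.1, smul_eq_mul, mul_one] at hc
          exact hc
        have : pb = pb' := Prod.ext (Subtype.ext hpp) (Subtype.ext hbb)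
        rw [this]
  -- quotient of W by C
  set CW : Submodule F W := C.comap W.subtype with hCWdef
  have hρinj : Function.Injective
      (fun x : F × Option ({p // p ∈ K} × {b : F // b ≠ 0}) =>
        Submodule.Quotient.mk (p := CW) ⟨g x, hgW x⟩) := by
    intro x y hxy
    simp only [Submodule.Quotient.eq] at hxy
    have hmem : g x - g y ∈ C := hxy
    by_cases hz : g x - g y = 0
    · exact hginj (sub_eq_zero.mp hz)
    · exfalso
      have hwt := hdist.2 _ hmem hz
      have hle1 : wt (g x - g y) ≤
          (insert i0 (insert i1 (esup x.2 ∪ esup y.2))).card := by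
        apply wt_le_card_of_support
        intro m hm
        by_contra hmS
        simp only [Finset.mem_insert, Finset.mem_union, not_or] at hmS
        obtain ⟨hm0, hm1, hmx, hmy⟩ := hmS
        have hx0 : g x m = 0 := by
          show (x.1 • w (i0,i1) + pv x.2) m = 0
          rw [Pi.add_apply, Pi.smul_apply, hf.2.2.1 m hm0 hm1, smul_zero,
            hpv0 x.2 m hmx, add_zero]
        have hy0 : g y m = 0 := by
          show (y.1 • w (i0,i1) + pv y.2) m = 0
          rw [Pi.add_apply, Pi.smul_apply, hf.2.2.1 m hm0 hm1, smul_zero,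
            hpv0 y.2 m hmy, add_zero]
        exact hm (by rw [Pi.sub_apply, hx0, hy0, sub_zero])
      have hle2 : (insert i0 (insert i1 (esup x.2 ∪ esup y.2))).card ≤ 6 := by
        have c1 := Finset.card_insert_le i0 (insert i1 (esup x.2 ∪ esup y.2))
        have c2 := Finset.card_insert_le i1 (esup x.2 ∪ esup y.2)
        have c3 := Finset.card_union_le (esup x.2) (esup y.2)
        have c4 := hesup2 x.2
        have c5 := hesup2 y.2
        omega
      omega
  haveI : Finite (W ⧸ CW) :=
    Finite.of_surjective (Submodule.Quotient.mk (p := CW))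
      (Submodule.Quotient.mk_surjective CW)
  haveI : Fintype (W ⧸ CW) := Fintype.ofFinite _
  have hcard1 : Fintype.card (F × Option ({p // p ∈ K} × {b : F // b ≠ 0}))
      ≤ Fintype.card (W ⧸ CW) := Fintype.card_le_of_injective _ hρinj
  have hcard2 : Fintype.card (W ⧸ CW) = Fintype.card F ^ Module.finrank F (W ⧸ CW) :=
    Module.card_eq_pow_finrank
  have hcardsub : Fintype.card {b : F // b ≠ 0} = Fintype.card F - 1 := by
    simp [Fintype.card_subtype_compl]
  have hcardD : Fintype.card (F × Option ({p // p ∈ K} × {b : F // b ≠ 0}))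
      = Fintype.card F * (K.card * (Fintype.card F - 1) + 1) := by
    rw [Fintype.card_prod, Fintype.card_option, Fintype.card_prod, hcardsub,
      Fintype.card_coe]
  -- ranks
  have hrk1 : Module.finrank F (W ⧸ CW) + Module.finrank F CW = Module.finrank F W :=
    Submodule.finrank_quotient_add_finrank CW
  have hrk2 : Module.finrank F CW = k := by
    rw [← hdim]
    exact LinearEquiv.finrank_eq (Submodule.comapSubtypeEquivOfLe hCW)
  have hrk3 : L + Module.finrank F W = n := by
    have h := LinearMap.finrank_range_add_finrank_ker Φ
    rw [LinearMap.range_eq_top.mpr hsurj, finrank_top, Module.finrank_fintype_fun_eq_card,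
      Module.finrank_fintype_fun_eq_card, Fintype.card_coe, hPL, Fintype.card_fin] at h
    exact h
  -- conclusion
  have hq2 : 1 < Fintype.card F := Fintype.one_lt_card
  have hMle : Fintype.card F + (Fintype.card F - 1) * Fintype.card F * (r * n / 2 - r)
      ≤ Fintype.card F ^ Module.finrank F (W ⧸ CW) := by
    rw [← hcardK, ← hcard2]
    calc Fintype.card F + (Fintype.card F - 1) * Fintype.card F * K.card
        = Fintype.card F * (K.card * (Fintype.card F - 1) + 1) := by ring
      _ = _ := hcardD.symm
      _ ≤ _ := hcard1
  have hlog : Nat.clog (Fintype.card F)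
      (Fintype.card F + (Fintype.card F - 1) * Fintype.card F * (r * n / 2 - r))
      ≤ Module.finrank F (W ⧸ CW) := (Nat.clog_le_iff_le_pow hq2).mpr hMle
  have h6 : k + Nat.clog (Fintype.card F)
      (Fintype.card F + (Fintype.card F - 1) * Fintype.card F * (r * n / 2 - r))
      ≤ Module.finrank F W := by omega
  have hfin : (Module.finrank F W : ℤ) = (L : ℤ) * r := by
    have h3 : L + Module.finrank F W = L * (r + 1) := hrk3.trans hn
    have h4 := congrArg (Nat.cast : ℕ → ℤ) h3
    push_cast at h4
    linear_combination h4
  have h7 := (Nat.cast_le (α := ℤ)).mpr h6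
  push_cast at h7
  linarith [h7, hfin]
end

section
/- (Inequality (4), intermediate step of Lemma 3) Let q be a prime power and let C be an LRC over F_q with disjoint local repair groups, locality r, length n = L(r+1), dimension k, and minimum distance d ≥ 7. Set u = Lr − k. Then q^u ≥ q + (q−1)·q·(rn/2 − r); equivalently, (q^u − q)/(q² − q) ≥ L·r(r+1)/2 − r. -/
variable {F : Type*} [Field F] [DecidableEq F] {n : ℕ}

set_option linter.unusedSectionVars false

lemma wt_le_card {v : Fin n → F} {S : Finset (Fin n)} (h : ∀ m, m ∉ S → v m = 0) :
    wt v ≤ S.card := by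
  apply Finset.card_le_card
  intro m hm
  simp only [Finset.mem_filter, Finset.mem_univ, true_and] at hm
  by_contra hns
  exact hm (h m hns)

def Evec (cc : Fin n → F) (i j : Fin n) : Fin n → F :=
  (cc i)⁻¹ • (Pi.single i 1 : Fin n → F) - (cc j)⁻¹ • (Pi.single j 1 : Fin n → F)

lemma Evec_apply_fst (cc : Fin n → F) {i j : Fin n} (hij : i ≠ j) :
    Evec cc i j i = (cc i)⁻¹ := by
  simp [Evec, Pi.single_eq_of_ne hij]

lemma Evec_apply_snd (cc : Fin n → F) {i j : Fin n} (hij : i ≠ j) :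
    Evec cc i j j = -(cc j)⁻¹ := by
  simp [Evec, Pi.single_eq_of_ne hij.symm]

lemma Evec_apply_other (cc : Fin n → F) {i j m : Fin n} (hmi : m ≠ i) (hmj : m ≠ j) :
    Evec cc i j m = 0 := by
  simp [Evec, Pi.single_eq_of_ne hmi, Pi.single_eq_of_ne hmj]

lemma sum_mul_smul_single (h : Fin n → F) (c : F) (i : Fin n) :
    ∑ m, h m * (c • (Pi.single i 1 : Fin n → F)) m = h i * c := by
  rw [Finset.sum_eq_single i]
  · simp
  · intro b _ hb; simp [Pi.single_eq_of_ne hb]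
  · simp

lemma sum_mul_Evec (h : Fin n → F) (cc : Fin n → F) (i j : Fin n) :
    ∑ m, h m * Evec cc i j m = h i * (cc i)⁻¹ - h j * (cc j)⁻¹ := by
  unfold Evec
  have : ∀ m, h m * ((cc i)⁻¹ • (Pi.single i 1 : Fin n → F) - (cc j)⁻¹ • (Pi.single j 1 : Fin n → F)) m
      = h m * ((cc i)⁻¹ • (Pi.single i 1 : Fin n → F)) m - h m * ((cc j)⁻¹ • (Pi.single j 1 : Fin n → F)) m := by
    intro m; simp [mul_sub]
  simp_rw [this, Finset.sum_sub_distrib, sum_mul_smul_single]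

/-- **Inequality (4), intermediate step of Lemma 3.** Let `q` be a prime power (the cardinality
of a finite field `F`) and `C` an LRC over `F` with disjoint local repair groups, locality
`r`, length `n = L(r+1)`, dimension `k`, and minimum distance `d ≥ 7`. Set `u = Lr − k`.
Then `q^u ≥ q + (q−1)·q·(rn/2 − r)`. -/
theorem inequality4_intermediate
    (F : Type*) [Field F] [Fintype F] [DecidableEq F] (q : ℕ) (hq : Fintype.card F = q)
    (L r : ℕ) (hL : 0 < L) (hr : 0 < r) (n k d : ℕ)
    (hn : n = L * (r + 1)) (hk : 1 ≤ k) (hd : 7 ≤ d)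
    (C : Submodule F (Fin n → F))
    (hdim : Module.finrank F C = k)
    (hdist : IsMinDist C d)
    (hloc : HasLocality C r)
    (hdis : HasDisjointLRG C r) :
    q ^ (L * r - k) ≥ q + (q - 1) * q * (r * n / 2 - r) := by
  classical
  obtain ⟨P, hPcard, hPuniq, hPdual⟩ := hdis
  choose! cdual hcd_mem hcd_supp using hPdual
  choose g hg hguniq using hPuniq
  have hgP : ∀ i, g i ∈ P := fun i => (hg i).1
  have hgmem : ∀ i, i ∈ g i := fun i => (hg i).2
  have huniq : ∀ {G : Finset (Fin n)} {i : Fin n}, G ∈ P → i ∈ G → G = g i :=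
    fun {G i} hG hi => hguniq i G ⟨hG, hi⟩
  set cc : Fin n → F := fun i => cdual (g i) i with hcc
  have hcc_ne : ∀ i, cc i ≠ 0 := fun i => (hcd_supp (g i) (hgP i) i).mpr (hgmem i)
  have hcd_zero : ∀ {G : Finset (Fin n)} {i : Fin n}, G ∈ P → i ∉ G → cdual G i = 0 := by
    intro G i hG hi
    by_contra h
    exact hi ((hcd_supp G hG i).mp h)
  -- the map cutting out the local code
  let ψ : {G // G ∈ P} → ((Fin n → F) →ₗ[F] F) := fun G =>
    { toFun := fun y => ∑ m, cdual G.1 m * y m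
      map_add' := by intro y z; simp [mul_add, Finset.sum_add_distrib]
      map_smul' := by intro a y; simp [Finset.mul_sum, mul_left_comm] }
  let φ : (Fin n → F) →ₗ[F] ({G // G ∈ P} → F) := LinearMap.pi ψ
  have hφ_apply : ∀ (y : Fin n → F) (G : {G // G ∈ P}), φ y G = ∑ m, cdual G.1 m * y m :=
    fun y G => rfl
  -- C is contained in the kernel of φ
  have hCle : ∀ x ∈ C, x ∈ LinearMap.ker φ := by
    intro x hx
    rw [LinearMap.mem_ker]
    funext G
    rw [hφ_apply]
    have h0 := hcd_mem G.1 G.2 x hx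
    simp only [Pi.zero_apply]
    rw [← h0]
    exact Finset.sum_congr rfl fun m _ => mul_comm _ _
  -- Evec vectors are in the kernel of φ
  have hEker : ∀ i j : Fin n, i ≠ j → g i = g j → Evec cc i j ∈ LinearMap.ker φ := by
    intro i j hij hgij
    rw [LinearMap.mem_ker]
    funext G
    rw [hφ_apply, sum_mul_Evec]
    simp only [Pi.zero_apply]
    by_cases hGi : G.1 = g i
    · have h1 : cdual G.1 i = cc i := by rw [hGi]
      have h2 : cdual G.1 j = cc j := by rw [hGi, hgij]
      rw [h1, h2, mul_inv_cancel₀ (hcc_ne i), mul_inv_cancel₀ (hcc_ne j), sub_self]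
    · have h1 : i ∉ G.1 := fun h => hGi (huniq G.2 h)
      have h2 : j ∉ G.1 := fun h => hGi (by rw [huniq G.2 h, ← hgij])
      rw [hcd_zero G.2 h1, hcd_zero G.2 h2]
      ring
  -- P has exactly L groups
  have hdisjGG : ∀ G ∈ P, ∀ G' ∈ P, G ≠ G' → Disjoint G G' := by
    intro G hG G' hG' hne
    rw [Finset.disjoint_left]
    intro a haG haG'
    exact hne ((huniq hG haG).trans (huniq hG' haG').symm)
  have hPcardL : P.card = L := by
    have h1 : (P.biUnion id).card = ∑ G ∈ P, G.card :=
      Finset.card_biUnion (fun G hG G' hG' h => hdisjGG G hG G' hG' h)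
    have h2 : P.biUnion id = Finset.univ :=
      Finset.eq_univ_of_forall fun i => Finset.mem_biUnion.mpr ⟨g i, hgP i, hgmem i⟩
    rw [h2, Finset.card_univ, Fintype.card_fin] at h1
    rw [Finset.sum_congr rfl (fun G hG => hPcard G hG), Finset.sum_const, smul_eq_mul] at h1
    have : L * (r+1) = P.card * (r+1) := by omega
    exact (Nat.eq_of_mul_eq_mul_right (by omega) this.symm)
  -- selection of an element in each group
  have hselex : ∀ G : {G // G ∈ P}, ∃ i : Fin n, i ∈ G.1 := by
    intro G
    have : 0 < G.1.card := by rw [hPcard G.1 G.2]; omega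
    exact Finset.card_pos.mp this
  choose sel hsel using hselex
  have hselne : ∀ G : {G // G ∈ P}, cdual G.1 (sel G) ≠ 0 :=
    fun G => (hcd_supp G.1 G.2 (sel G)).mpr (hsel G)
  -- φ is surjective
  have hsurj : Function.Surjective φ := by
    intro t
    refine ⟨∑ G : {G // G ∈ P}, (t G * (cdual G.1 (sel G))⁻¹) • (Pi.single (sel G) 1 : Fin n → F), ?_⟩
    funext G'
    rw [map_sum, Finset.sum_apply]
    have hterm : ∀ G : {G // G ∈ P},
        φ ((t G * (cdual G.1 (sel G))⁻¹) • (Pi.single (sel G) 1 : Fin n → F)) G'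
          = cdual G'.1 (sel G) * (t G * (cdual G.1 (sel G))⁻¹) := by
      intro G
      rw [hφ_apply, sum_mul_smul_single]
    rw [Finset.sum_congr rfl (fun G _ => hterm G), Finset.sum_eq_single G']
    · rw [mul_comm, mul_assoc, inv_mul_cancel₀ (hselne G'), mul_one]
    · intro G _ hne
      have hnm : sel G ∉ G'.1 := fun hmem =>
        hne (Subtype.ext ((huniq G.2 (hsel G)).trans (huniq G'.2 hmem).symm))
      rw [hcd_zero G'.2 hnm, zero_mul]
    · intro h; exact absurd (Finset.mem_univ G') h
  -- the kernel has dimension L*r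
  have hkerrank : Module.finrank F (LinearMap.ker φ) = L * r := by
    have h := LinearMap.finrank_range_add_finrank_ker φ
    rw [LinearMap.range_eq_top.mpr hsurj, finrank_top, Module.finrank_pi,
      Module.finrank_pi] at h
    rw [Fintype.card_coe, hPcardL, Fintype.card_fin] at h
    subst hn
    have hexp : L * (r + 1) = L * r + L := by ring
    omega
  -- pick a distinguished group and two of its coordinates
  have hPne : P.Nonempty := by rw [← Finset.card_pos, hPcardL]; exact hL
  obtain ⟨G₁, hG₁⟩ := hPne
  have h1lt : 1 < G₁.card := by rw [hPcard G₁ hG₁]; omega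
  obtain ⟨i₁, hi₁, j₁, hj₁, hij₁⟩ := Finset.one_lt_card.mp h1lt
  have hgi₁ : g i₁ = G₁ := (huniq hG₁ hi₁).symm
  have hgj₁ : g j₁ = G₁ := (huniq hG₁ hj₁).symm
  -- the pairs
  set P2 : Finset (Finset (Fin n)) := P.biUnion (fun G => G.powersetCard 2) with hP2
  have hP2card : P2.card = L * ((r+1).choose 2) := by
    rw [hP2, Finset.card_biUnion]
    · rw [Finset.sum_congr rfl (fun G hG => by rw [Finset.card_powersetCard, hPcard G hG])]
      rw [Finset.sum_const, smul_eq_mul, hPcardL]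
    · intro G hG G' hG' hne
      rw [Function.onFun, Finset.disjoint_left]
      intro t ht ht'
      rw [Finset.mem_powersetCard] at ht ht'
      obtain ⟨a, ha⟩ := Finset.card_pos.mp (by rw [ht.2]; norm_num : 0 < t.card)
      exact hne ((huniq hG (ht.1 ha)).trans (huniq hG' (ht'.1 ha)).symm)
  set Q : Finset (Finset (Fin n)) := P2.filter (fun t => i₁ ∉ t) with hQdef
  have hfilt : P2.filter (fun t => i₁ ∈ t) = (G₁.erase i₁).image (fun x => {i₁, x}) := by
    apply Finset.ext
    intro t
    constructor
    · intro ht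
      rw [Finset.mem_filter] at ht
      obtain ⟨ht2, hti⟩ := ht
      rw [hP2, Finset.mem_biUnion] at ht2
      obtain ⟨G, hG, htG⟩ := ht2
      rw [Finset.mem_powersetCard] at htG
      obtain ⟨hsub, hcard2⟩ := htG
      have hGG₁ : G = G₁ := (huniq hG (hsub hti)).trans (huniq hG₁ hi₁).symm
      obtain ⟨a, b, hab, hteq⟩ := Finset.card_eq_two.mp hcard2
      rw [Finset.mem_image]
      rw [hteq, Finset.mem_insert, Finset.mem_singleton] at hti
      rcases hti with h | h
      · refine ⟨b, ?_, ?_⟩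
        · rw [Finset.mem_erase]
          refine ⟨by rw [h]; exact hab.symm, ?_⟩
          rw [← hGG₁]; exact hsub (by rw [hteq]; simp)
        · rw [hteq, h]
      · refine ⟨a, ?_, ?_⟩
        · rw [Finset.mem_erase]
          refine ⟨by rw [h]; exact hab, ?_⟩
          rw [← hGG₁]; exact hsub (by rw [hteq]; simp)
        · rw [hteq, h, Finset.pair_comm]
    · intro ht
      rw [Finset.mem_image] at ht
      obtain ⟨x, hx, hteq⟩ := ht
      rw [Finset.mem_erase] at hx
      rw [Finset.mem_filter]
      constructor
      · rw [hP2, Finset.mem_biUnion]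
        refine ⟨G₁, hG₁, ?_⟩
        rw [Finset.mem_powersetCard]
        constructor
        · rw [← hteq]
          intro y hy
          rw [Finset.mem_insert, Finset.mem_singleton] at hy
          rcases hy with h | h
          · rw [h]; exact hi₁
          · rw [h]; exact hx.2
        · rw [← hteq, Finset.card_pair (Ne.symm hx.1)]
      · rw [← hteq]; simp
  have hfiltcard : (P2.filter (fun t => i₁ ∈ t)).card = r := by
    rw [hfilt, Finset.card_image_of_injOn, Finset.card_erase_of_mem hi₁, hPcard G₁ hG₁]
    · omega
    · intro x hx y hy hxy
      rw [Finset.mem_coe, Finset.mem_erase] at hx hy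
      have hxy' : ({i₁, x} : Finset (Fin n)) = {i₁, y} := hxy
      have : x ∈ ({i₁, y} : Finset (Fin n)) := by rw [← hxy']; simp
      rw [Finset.mem_insert, Finset.mem_singleton] at this
      rcases this with h | h
      · exact absurd h hx.1
      · exact h
  have hQcard : Q.card = L * ((r+1).choose 2) - r := by
    have := Finset.card_filter_add_card_filter_not (s := P2) (p := fun t => i₁ ∈ t)
    rw [hfiltcard, hP2card] at this
    rw [hQdef]
    have hQeq : (P2.filter fun t => i₁ ∉ t) = P2.filter (fun t => ¬ i₁ ∈ t) := rfl
    omega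
  -- arithmetic: L * choose 2 (r+1) = r * n / 2
  obtain ⟨m, hm⟩ := Nat.even_mul_succ_self r
  have hchm : (r+1).choose 2 = m := by
    rw [Nat.choose_two_right]
    have : (r+1) * (r+1-1) = r * (r+1) := by rw [Nat.add_sub_cancel, mul_comm]
    rw [this, hm]
    omega
  have hrn2 : r * n / 2 = L * m := by
    have h1 : r * n = 2 * (L * m) := by
      rw [hn]
      calc r * (L * (r+1)) = L * (r * (r+1)) := by ring
        _ = 2 * (L * m) := by rw [hm]; ring
    omega
  -- canonical data for each pair in Q
  have hQdata : ∀ t ∈ Q, ∃ p : Fin n × Fin n, p.1 ≠ p.2 ∧ t = {p.1, p.2} ∧ g p.1 = g p.2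
      ∧ p.1 ≠ i₁ ∧ p.2 ≠ i₁ := by
    intro t ht
    rw [hQdef, Finset.mem_filter] at ht
    obtain ⟨ht2, hti⟩ := ht
    rw [hP2, Finset.mem_biUnion] at ht2
    obtain ⟨G, hG, htG⟩ := ht2
    rw [Finset.mem_powersetCard] at htG
    obtain ⟨hsub, hcard2⟩ := htG
    obtain ⟨a, b, hab, hteq⟩ := Finset.card_eq_two.mp hcard2
    have haG : a ∈ G := hsub (by rw [hteq]; simp)
    have hbG : b ∈ G := hsub (by rw [hteq]; simp)
    refine ⟨(a, b), hab, hteq, ?_, ?_, ?_⟩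
    · rw [← huniq hG haG, ← huniq hG hbG]
    · intro h; apply hti; rw [hteq, ← h]; simp
    · intro h; apply hti; rw [hteq, ← h]; simp
  haveI : Inhabited (Fin n) := ⟨i₁⟩
  choose! pr hpr_ne hpr_set hpr_g hpr_1 hpr_2 using hQdata
  -- the distinguished vector and the family of vectors indexed by options
  set E₁ : Fin n → F := Evec cc i₁ j₁ with hE₁
  let Vo : Option ({t // t ∈ Q} × Fˣ) → (Fin n → F) := fun o =>
    Option.elim o 0 (fun z => ((z.2 : F)) • Evec cc (pr z.1.1).1 (pr z.1.1).2)
  have hVo_ker : ∀ o, Vo o ∈ LinearMap.ker φ := by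
    intro o
    match o with
    | none => exact Submodule.zero_mem _
    | some z =>
      exact Submodule.smul_mem _ _ (hEker _ _ (hpr_ne z.1.1 z.1.2) (hpr_g z.1.1 z.1.2))
  have hVo_i₁ : ∀ o, Vo o i₁ = 0 := by
    intro o
    match o with
    | none => rfl
    | some z =>
      have h1 := hpr_1 z.1.1 z.1.2
      have h2 := hpr_2 z.1.1 z.1.2
      simp only [Vo, Option.elim, Pi.smul_apply, smul_eq_mul]
      rw [Evec_apply_other cc (Ne.symm h1) (Ne.symm h2), mul_zero]
  -- support control
  let S : Option ({t // t ∈ Q} × Fˣ) → Finset (Fin n) := fun o =>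
    Option.elim o ∅ (fun z => {(pr z.1.1).1, (pr z.1.1).2})
  have hS_zero : ∀ o mm, mm ∉ S o → Vo o mm = 0 := by
    intro o mm hmm
    match o with
    | none => rfl
    | some z =>
      simp only [S, Option.elim, Finset.mem_insert, Finset.mem_singleton, not_or] at hmm
      simp only [Vo, Option.elim, Pi.smul_apply, smul_eq_mul]
      rw [Evec_apply_other cc hmm.1 hmm.2, mul_zero]
  have hScard : ∀ o, (S o).card ≤ 2 := by
    intro o
    match o with
    | none => simp [S]
    | some z =>
      simp only [S, Option.elim]
      exact (Finset.card_insert_le _ _).trans (by simp)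
  -- the injection
  let Ψ : (↥C × F × Option ({t // t ∈ Q} × Fˣ)) → ↥(LinearMap.ker φ) := fun z =>
    ⟨(z.1 : Fin n → F) + z.2.1 • E₁ + Vo z.2.2, by
      apply Submodule.add_mem
      · apply Submodule.add_mem
        · exact hCle z.1 z.1.2
        · exact Submodule.smul_mem _ _ (hEker i₁ j₁ hij₁ (hgi₁.trans hgj₁.symm))
      · exact hVo_ker z.2.2⟩
  have hinj : Function.Injective Ψ := by
    rintro ⟨x, b, o⟩ ⟨x', b', o'⟩ h
    have hval : (x : Fin n → F) + b • E₁ + Vo o = (x' : Fin n → F) + b' • E₁ + Vo o' :=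
      congrArg Subtype.val h
    set v : Fin n → F := (x' : Fin n → F) - (x : Fin n → F) with hvdef
    have hvm : ∀ mm, v mm = (b - b') * E₁ mm + (Vo o mm - Vo o' mm) := by
      intro mm
      have h2 := congrFun hval mm
      simp only [Pi.add_apply, Pi.smul_apply, smul_eq_mul] at h2
      simp only [hvdef, Pi.sub_apply]
      linear_combination -h2
    have hvC : v ∈ C := Submodule.sub_mem C x'.2 x.2
    have hv0 : v = 0 := by
      by_contra hne
      have hwt := hdist.2 v hvC hne
      have hle : wt v ≤ (insert i₁ (insert j₁ (S o ∪ S o'))).card := by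
        apply wt_le_card
        intro mm hmm
        simp only [Finset.mem_insert, Finset.mem_union, not_or] at hmm
        obtain ⟨h1, h2, h3, h4⟩ := hmm
        rw [hvm, hS_zero o mm h3, hS_zero o' mm h4, hE₁, Evec_apply_other cc h1 h2]
        ring
      have hc6 : (insert i₁ (insert j₁ (S o ∪ S o'))).card ≤ 6 := by
        have c1 := Finset.card_insert_le i₁ (insert j₁ (S o ∪ S o'))
        have c2 := Finset.card_insert_le j₁ (S o ∪ S o')
        have c3 := Finset.card_union_le (S o) (S o')
        have c4 := hScard o
        have c5 := hScard o'
        omega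
      omega
    have hzero : ∀ mm, (b - b') * E₁ mm + (Vo o mm - Vo o' mm) = 0 := by
      intro mm
      have h2 := hvm mm
      rw [hv0] at h2
      simpa using h2.symm
    have hbb : b = b' := by
      have h0 := hzero i₁
      rw [hVo_i₁ o, hVo_i₁ o'] at h0
      have hE : E₁ i₁ = (cc i₁)⁻¹ := by rw [hE₁]; exact Evec_apply_fst cc hij₁
      rw [hE] at h0
      have h1 : (b - b') * (cc i₁)⁻¹ = 0 := by linear_combination h0
      rcases mul_eq_zero.mp h1 with h' | h'
      · exact sub_eq_zero.mp h'
      · exact absurd h' (inv_ne_zero (hcc_ne i₁))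
    have hVoeq : ∀ mm, Vo o mm = Vo o' mm := by
      intro mm
      have h0 := hzero mm
      rw [hbb, sub_self, zero_mul, zero_add, sub_eq_zero] at h0
      exact h0
    have hxx : x = x' := by
      have : (x' : Fin n → F) - (x : Fin n → F) = 0 := hv0
      exact (Subtype.ext (sub_eq_zero.mp this)).symm
    -- a nonvanishing point of Vo (some z)
    have hVo_ne : ∀ (z : {t // t ∈ Q} × Fˣ) (mm : Fin n), mm ∈ (z.1 : Finset (Fin n)) →
        Vo (some z) mm ≠ 0 := by
      intro z mm hmm
      have hset := hpr_set z.1.1 z.1.2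
      rw [hset, Finset.mem_insert, Finset.mem_singleton] at hmm
      simp only [Vo, Option.elim, Pi.smul_apply, smul_eq_mul]
      rcases hmm with h' | h'
      · rw [h', Evec_apply_fst cc (hpr_ne z.1.1 z.1.2)]
        exact mul_ne_zero z.2.ne_zero (inv_ne_zero (hcc_ne _))
      · rw [h', Evec_apply_snd cc (hpr_ne z.1.1 z.1.2)]
        exact mul_ne_zero z.2.ne_zero (neg_ne_zero.mpr (inv_ne_zero (hcc_ne _)))
    have hVo_out : ∀ (z : {t // t ∈ Q} × Fˣ) (mm : Fin n), mm ∉ (z.1 : Finset (Fin n)) →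
        Vo (some z) mm = 0 := by
      intro z mm hmm
      apply hS_zero
      simp only [S, Option.elim]
      have hset := hpr_set z.1.1 z.1.2
      rw [← hset]
      exact hmm
    have hoo : o = o' := by
      match o, o' with
      | none, none => rfl
      | some z, none =>
        exfalso
        have hmem : (pr z.1.1).1 ∈ (z.1 : Finset (Fin n)) := by
          have h' : (pr z.1.1).1 ∈ ({(pr z.1.1).1, (pr z.1.1).2} : Finset (Fin n)) := by simp
          rw [← hpr_set z.1.1 z.1.2] at h'
          exact h'
        exact hVo_ne z _ hmem (by rw [hVoeq]; rfl)
      | none, some z =>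
        exfalso
        have hmem : (pr z.1.1).1 ∈ (z.1 : Finset (Fin n)) := by
          have h' : (pr z.1.1).1 ∈ ({(pr z.1.1).1, (pr z.1.1).2} : Finset (Fin n)) := by simp
          rw [← hpr_set z.1.1 z.1.2] at h'
          exact h'
        exact hVo_ne z _ hmem (by rw [← hVoeq]; rfl)
      | some z, some z' =>
        have htt : z.1 = z'.1 := by
          by_contra hne
          have htne : (z.1 : Finset (Fin n)) ≠ (z'.1 : Finset (Fin n)) :=
            fun h' => hne (Subtype.ext h')
          have hex : ∃ mm, (mm ∈ (z.1:Finset (Fin n)) ∧ mm ∉ (z'.1:Finset (Fin n)))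
              ∨ (mm ∈ (z'.1:Finset (Fin n)) ∧ mm ∉ (z.1:Finset (Fin n))) := by
            by_contra hall
            push_neg at hall
            apply htne
            apply Finset.ext
            intro mm
            have h1 := (hall mm).1
            have h2 := (hall mm).2
            constructor
            · intro hm; exact h1 hm
            · intro hm; exact h2 hm
          obtain ⟨mm, hcase⟩ := hex
          rcases hcase with ⟨hin, hout⟩ | ⟨hin, hout⟩
          · exact hVo_ne z mm hin (by rw [hVoeq mm, hVo_out z' mm hout])
          · exact hVo_ne z' mm hin (by rw [← hVoeq mm, hVo_out z mm hout])
        have hpp : pr (z.1 : Finset (Fin n)) = pr (z'.1 : Finset (Fin n)) := by rw [htt]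
        have haa : z.2 = z'.2 := by
          have h0 := hVoeq ((pr z.1.1).1)
          simp only [Vo, Option.elim, Pi.smul_apply, smul_eq_mul] at h0
          rw [Evec_apply_fst cc (hpr_ne z.1.1 z.1.2), ← hpp,
            Evec_apply_fst cc (hpr_ne z.1.1 z.1.2)] at h0
          have := mul_right_cancel₀ (inv_ne_zero (hcc_ne ((pr z.1.1).1))) h0
          exact Units.ext this
        exact congrArg _ (Prod.ext htt haa)
    rw [hxx, hbb, hoo]
  -- cardinalities
  have hcardker : Fintype.card (LinearMap.ker φ) = q ^ (L * r) := by
    rw [Module.card_eq_pow_finrank (K := F) (V := LinearMap.ker φ), hq, hkerrank]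
  have hcardC : Fintype.card C = q ^ k := by
    rw [Module.card_eq_pow_finrank (K := F) (V := C), hq, hdim]
  have hle := Fintype.card_le_of_injective Ψ hinj
  rw [hcardker] at hle
  have hcardD : Fintype.card (↥C × F × Option ({t // t ∈ Q} × Fˣ))
      = q ^ k * (q * ((L * ((r+1).choose 2) - r) * (q - 1) + 1)) := by
    rw [Fintype.card_prod, Fintype.card_prod, Fintype.card_option, Fintype.card_prod,
      Fintype.card_units, Fintype.card_coe, hcardC, hq, hQcard]
  rw [hcardD] at hle
  have hq2 : 2 ≤ q := by rw [← hq]; exact Fintype.one_lt_card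
  have hgoal_rhs : q + (q - 1) * q * (r * n / 2 - r)
      = q * ((L * ((r+1).choose 2) - r) * (q - 1) + 1) := by
    rw [hrn2, hchm]
    ring
  rw [hgoal_rhs]
  by_cases hkLr : k ≤ L * r
  · have hpow : q ^ (L * r) = q ^ k * q ^ (L * r - k) := by
      rw [← pow_add]
      congr 1
      omega
    rw [hpow] at hle
    exact Nat.le_of_mul_le_mul_left hle (by positivity)
  · exfalso
    have h1 : q ^ (L * r) < q ^ k := Nat.pow_lt_pow_right (by omega) (by omega)
    have h2 : q ^ k ≤ q ^ k * (q * ((L * ((r+1).choose 2) - r) * (q - 1) + 1)) :=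
      Nat.le_mul_of_pos_right _ (by positivity)
    omega
end

section
/- (Lemma 4) Let q be a prime power, L a positive integer, and let C be an almost optimal LRC over F_q with disjoint local repair groups and parameters n = 3L, k = 2L − 4, d = 7, r = 2 (note that d = n − k − ⌈k/r⌉ + 1 holds for these parameters). Then n ≤ q² + q + 3. -/
variable {F : Type*} [Field F] [DecidableEq F] {n : ℕ}

/- ### Auxiliary lemmas -/

lemma wt_le_of_support {F : Type*} [Field F] [DecidableEq F] {n : ℕ} (v : Fin n → F)
    (s : Finset (Fin n)) (h : ∀ i, v i ≠ 0 → i ∈ s) : wt v ≤ s.card :=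
  Finset.card_le_card fun i hi => h i (Finset.mem_filter.mp hi).2

lemma span_pair_eq_span_pair {K M : Type*} [Field K] [AddCommGroup M] [Module K M]
    {x p u : M} {α β : K} (hu : α • x + β • p = u) (hβ : β ≠ 0) :
    Submodule.span K {x, p} = Submodule.span K {x, u} := by
  have hx1 : x ∈ Submodule.span K ({x, u} : Set M) := Submodule.subset_span (by simp)
  have hu1 : u ∈ Submodule.span K ({x, u} : Set M) := Submodule.subset_span (by simp)
  have hx2 : x ∈ Submodule.span K ({x, p} : Set M) := Submodule.subset_span (by simp)
  have hp2 : p ∈ Submodule.span K ({x, p} : Set M) := Submodule.subset_span (by simp)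
  apply le_antisymm
  · rw [Submodule.span_le]
    intro z hz
    simp only [Set.mem_insert_iff, Set.mem_singleton_iff] at hz
    rcases hz with rfl | rfl
    · exact hx1
    · have hp : z = β⁻¹ • (u - α • x) := by
        rw [← hu, add_sub_cancel_left, smul_smul, inv_mul_cancel₀ hβ, one_smul]
      rw [hp]
      exact Submodule.smul_mem _ _ (Submodule.sub_mem _ hu1 (Submodule.smul_mem _ _ hx1))
  · rw [Submodule.span_le]
    intro z hz
    simp only [Set.mem_insert_iff, Set.mem_singleton_iff] at hz
    rcases hz with rfl | rfl
    · exact hx2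
    · rw [← hu]
      exact Submodule.add_mem _ (Submodule.smul_mem _ _ hx2) (Submodule.smul_mem _ _ hp2)

/-- The linear functional `x ↦ ∑ i, x i * a i`. -/
def dotL {F : Type*} [Field F] {n : ℕ} (a : Fin n → F) : (Fin n → F) →ₗ[F] F where
  toFun x := ∑ i, x i * a i
  map_add' x y := by simp [add_mul, Finset.sum_add_distrib]
  map_smul' c x := by simp [Finset.mul_sum, mul_assoc]

set_option maxHeartbeats 3200000 in
/-- **Lemma 4.** Let `q` be a prime power (the cardinality of a finite field `F`), `L` a
positive integer, and `C` an almost optimal LRC over `F` with disjoint local repair groups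
and parameters `n = 3L`, `k = 2L − 4`, `d = 7`, `r = 2`. Then `n ≤ q² + q + 3`. -/
theorem lemma4_length_bound
    (F : Type*) [Field F] [Fintype F] [DecidableEq F] (q : ℕ) (hq : Fintype.card F = q)
    (L : ℕ) (hL : 0 < L) (n k : ℕ)
    (hn : n = 3 * L) (hk : k = 2 * L - 4) (hk1 : 1 ≤ k)
    (C : Submodule F (Fin n → F))
    (hdim : Module.finrank F C = k)
    (hdist : IsMinDist C 7)
    (hloc : HasLocality C 2)
    (hdis : HasDisjointLRG C 2) :
    n ≤ q ^ 2 + q + 3 := by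
  classical
  have hL3 : 3 ≤ L := by omega
  have hq2 : 2 ≤ q := hq ▸ Fintype.one_lt_card
  obtain ⟨P, hPcard, hPuniq, hPdual⟩ := hdis
  -- groups
  choose grp hgrpP hgrpmem using fun i => (hPuniq i).exists
  have grp_unique : ∀ {i : Fin n} {G : Finset (Fin n)}, G ∈ P → i ∈ G → G = grp i :=
    fun {i G} h1 h2 => (hPuniq i).unique ⟨h1, h2⟩ ⟨hgrpP i, hgrpmem i⟩
  have grp_eq : ∀ {i j : Fin n}, j ∈ grp i → grp j = grp i :=
    fun {i j} h => (grp_unique (hgrpP i) h).symm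
  -- local codewords
  set cG : Finset (Fin n) → (Fin n → F) :=
    fun G => if h : G ∈ P then (hPdual G h).choose else 0 with hcG
  have hcG_mem : ∀ G ∈ P, cG G ∈ dualCode C := by
    intro G h
    simp only [hcG, dif_pos h]
    exact (hPdual G h).choose_spec.1
  have hcG_supp : ∀ G ∈ P, ∀ t, cG G t ≠ 0 ↔ t ∈ G := by
    intro G h
    simp only [hcG, dif_pos h]
    exact (hPdual G h).choose_spec.2
  -- the partition has L parts
  have hPL : P.card = L := by
    have huniv : (Finset.univ : Finset (Fin n)) = P.biUnion id := by
      ext i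
      simp only [Finset.mem_biUnion, id, Finset.mem_univ, true_iff]
      exact ⟨grp i, hgrpP i, hgrpmem i⟩
    have hdisj : ∀ G ∈ P, ∀ G' ∈ P, G ≠ G' → Disjoint G G' := by
      intro G hG G' hG' hne
      rw [Finset.disjoint_left]
      intro t ht ht'
      exact hne ((grp_unique hG ht).trans (grp_unique hG' ht').symm)
    have h1 : n = ∑ G ∈ P, G.card := by
      calc n = (Finset.univ : Finset (Fin n)).card := by
              rw [Finset.card_univ, Fintype.card_fin]
        _ = ∑ G ∈ P, G.card := by
              rw [huniv]; exact Finset.card_biUnion hdisj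
    rw [Finset.sum_congr rfl (fun G hG => hPcard G hG), Finset.sum_const, smul_eq_mul] at h1
    omega
  -- erased groups have two elements; choose them
  have hc2 : ∀ i : Fin n, ((grp i).erase i).card = 2 := fun i => by
    rw [Finset.card_erase_of_mem (hgrpmem i), hPcard _ (hgrpP i)]
  have hpair : ∀ i : Fin n, ∃ jk : Fin n × Fin n,
      jk.1 ≠ jk.2 ∧ (grp i).erase i = {jk.1, jk.2} := by
    intro i
    obtain ⟨a, b, hab, hs⟩ := Finset.card_eq_two.mp (hc2 i)
    exact ⟨(a, b), hab, hs⟩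
  choose pr hprne hprs using hpair
  have ha_mem : ∀ i : Fin n, (pr i).1 ∈ (grp i).erase i := fun i => by
    rw [hprs i]; simp
  have hb_mem : ∀ i : Fin n, (pr i).2 ∈ (grp i).erase i := fun i => by
    rw [hprs i]; simp
  -- the vectors v i
  set v : Fin n → (Fin n → F) :=
    fun i => Pi.single (pr i).1 (cG (grp i) (pr i).2)
      - Pi.single (pr i).2 (cG (grp i) (pr i).1) with hv
  have hv_zero : ∀ i t, t ∉ (grp i).erase i → v i t = 0 := by
    intro i t ht
    rw [hprs i] at ht
    simp only [Finset.mem_insert, Finset.mem_singleton, not_or] at ht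
    simp [hv, Pi.single_apply, ht.1, ht.2]
  have hv_zero' : ∀ i t, grp t ≠ grp i → v i t = 0 := by
    intro i t h
    exact hv_zero i t (fun hmem => h (grp_eq (Finset.mem_of_mem_erase hmem)))
  have hv_ne : ∀ i t, t ∈ (grp i).erase i → v i t ≠ 0 := by
    intro i t ht
    have hane := hprne i
    have hamem := Finset.mem_of_mem_erase (ha_mem i)
    have hbmem := Finset.mem_of_mem_erase (hb_mem i)
    have hca : cG (grp i) ((pr i).1) ≠ 0 := (hcG_supp _ (hgrpP i) _).mpr hamem
    have hcb : cG (grp i) ((pr i).2) ≠ 0 := (hcG_supp _ (hgrpP i) _).mpr hbmem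
    rw [hprs i] at ht
    simp only [Finset.mem_insert, Finset.mem_singleton] at ht
    rcases ht with rfl | rfl
    · simp [hv, Pi.single_apply, hane, Ne.symm hane, hcb]
    · simp [hv, Pi.single_apply, hane, Ne.symm hane, hca]
  -- the map cutting out K
  set Phi : (Fin n → F) →ₗ[F] ({G // G ∈ P} → F) :=
    LinearMap.pi (fun G => dotL (cG G.1)) with hPhi
  have hPhi_apply : ∀ (x : Fin n → F) (G : {G // G ∈ P}),
      Phi x G = ∑ i, x i * cG G.1 i := fun x G => rfl
  set K := LinearMap.ker Phi with hK
  have hCK : C ≤ K := by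
    intro y hy
    rw [hK, LinearMap.mem_ker]
    funext G
    rw [hPhi_apply]
    exact hcG_mem G.1 G.2 y hy
  have hvK : ∀ i, v i ∈ K := by
    intro i
    rw [hK, LinearMap.mem_ker]
    funext G
    rw [hPhi_apply, Pi.zero_apply]
    have hsum : ∑ t, v i t * cG G.1 t
        = cG (grp i) ((pr i).2) * cG G.1 ((pr i).1)
          - cG (grp i) ((pr i).1) * cG G.1 ((pr i).2) := by
      simp only [hv, Pi.sub_apply, Pi.single_apply, sub_mul, ite_mul, zero_mul,
        Finset.sum_sub_distrib, Finset.sum_ite_eq', Finset.mem_univ, if_true]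
    rw [hsum]
    by_cases hG : G.1 = grp i
    · rw [hG]; ring
    · have h1 : cG G.1 ((pr i).1) = 0 := by
        by_contra h
        have := (hcG_supp G.1 G.2 _).mp h
        exact hG ((grp_unique G.2 this).trans
          (grp_eq (Finset.mem_of_mem_erase (ha_mem i))))
      have h2 : cG G.1 ((pr i).2) = 0 := by
        by_contra h
        have := (hcG_supp G.1 G.2 _).mp h
        exact hG ((grp_unique G.2 this).trans
          (grp_eq (Finset.mem_of_mem_erase (hb_mem i))))
      rw [h1, h2]; ring
  -- Phi is surjective
  have hranPhi : LinearMap.range Phi = ⊤ := by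
    rw [eq_top_iff]
    intro f _
    rw [pi_eq_sum_univ f]
    apply Submodule.sum_mem
    intro G _
    apply Submodule.smul_mem
    obtain ⟨i1, hi1⟩ := Finset.card_pos.mp (by rw [hPcard G.1 G.2]; norm_num : 0 < G.1.card)
    refine ⟨Pi.single i1 ((cG G.1 i1)⁻¹), ?_⟩
    funext G'
    show (∑ t, (Pi.single i1 ((cG G.1 i1)⁻¹) : Fin n → F) t * cG G'.1 t)
        = if G = G' then (1:F) else 0
    have hsum : ∑ t, (Pi.single i1 ((cG G.1 i1)⁻¹) : Fin n → F) t * cG G'.1 t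
        = (cG G.1 i1)⁻¹ * cG G'.1 i1 := by
      simp [Pi.single_apply, ite_mul, zero_mul, Finset.sum_ite_eq']
    rw [hsum]
    by_cases h : G = G'
    · subst h
      have hne : cG G.1 i1 ≠ 0 := (hcG_supp G.1 G.2 _).mpr hi1
      rw [if_pos rfl, inv_mul_cancel₀ hne]
    · have h0 : cG G'.1 i1 = 0 := by
        by_contra hcc
        have := (hcG_supp G'.1 G'.2 _).mp hcc
        exact h (Subtype.ext ((grp_unique G.2 hi1).trans (grp_unique G'.2 this).symm))
      rw [if_neg h, h0, mul_zero]
  -- dimension of U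
  set U := K.map C.mkQ with hU
  have hfinK : Module.finrank F K + L = n := by
    have h1 := LinearMap.finrank_range_add_finrank_ker Phi
    rw [hranPhi, finrank_top, Module.finrank_pi, Module.finrank_pi] at h1
    rw [Fintype.card_fin, Fintype.card_coe, hPL] at h1
    rw [hK]
    omega
  have hfinU : Module.finrank F U = 4 := by
    have h2 := LinearMap.finrank_range_add_finrank_ker (C.mkQ.comp K.subtype)
    have hrange : LinearMap.range (C.mkQ.comp K.subtype) = U := by
      rw [LinearMap.range_comp, Submodule.range_subtype]
    have hker : LinearMap.ker (C.mkQ.comp K.subtype) = Submodule.comap K.subtype C := by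
      rw [LinearMap.ker_comp, Submodule.ker_mkQ]
    rw [hrange, hker] at h2
    have h3 : Module.finrank F (Submodule.comap K.subtype C) = k := by
      rw [← hdim]
      exact LinearEquiv.finrank_eq (Submodule.comapSubtypeEquivOfLe hCK)
    rw [h3] at h2
    omega
  -- pass to the quotient space
  haveI : Finite ((Fin n → F) ⧸ C) := Finite.of_surjective _ (Submodule.mkQ_surjective C)
  letI : Fintype ((Fin n → F) ⧸ C) := Fintype.ofFinite _
  set Pv : Fin n → (Fin n → F) ⧸ C := fun i => C.mkQ (v i) with hPv
  have hPvU : ∀ i, Pv i ∈ U := fun i => Submodule.mem_map_of_mem (hvK i)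
  -- minimum distance: small-weight codewords vanish
  have hA : ∀ w : Fin n → F, w ∈ C → wt w ≤ 6 → w = 0 := by
    intro w hw hwt
    by_contra hne
    have := hdist.2 w hw hne
    omega
  have hsupp3 : ∀ (a b c' : Fin n) (α β : F), wt (v a - (α • v b + β • v c')) ≤ 6 := by
    intro a b c' α β
    have hsub : ∀ t : Fin n, (v a - (α • v b + β • v c')) t ≠ 0 →
        t ∈ ((grp a).erase a ∪ (grp b).erase b) ∪ (grp c').erase c' := by
      intro t h0
      by_contra hts
      simp only [Finset.mem_union, not_or] at hts
      apply h0
      simp [Pi.sub_apply, Pi.add_apply, Pi.smul_apply, hv_zero a t hts.1.1,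
        hv_zero b t hts.1.2, hv_zero c' t hts.2]
    refine le_trans (wt_le_of_support _ _ hsub) ?_
    refine le_trans (Finset.card_union_le _ _) ?_
    have h1 := Finset.card_union_le ((grp a).erase a) ((grp b).erase b)
    have h2 := hc2 a; have h3 := hc2 b; have h4 := hc2 c'
    omega
  have hlift : ∀ (a b c' : Fin n) (α β : F),
      Pv a = α • Pv b + β • Pv c' → v a = α • v b + β • v c' := by
    intro a b c' α β hq'
    have h0 : C.mkQ (v a - (α • v b + β • v c')) = 0 := by
      rw [map_sub, map_add, map_smul, map_smul]
      rw [hPv] at hq'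
      simp only at hq'
      rw [← hq', sub_self]
    have hmem : v a - (α • v b + β • v c') ∈ C := by
      rwa [Submodule.mkQ_apply, Submodule.Quotient.mk_eq_zero] at h0
    have hz := hA _ hmem (hsupp3 a b c' α β)
    have := sub_eq_zero.mp hz
    exact this
  -- the key independence lemma
  have keyvec : ∀ (i j i0 : Fin n) (α β : F), j ≠ i0 → i ≠ j →
      ¬(grp i = grp i0 ∧ grp j = grp i0) → v j = α • v i0 + β • v i → False := by
    intro i j i0 α β hji0 hij hnot hE
    have E : ∀ t, v j t = α * v i0 t + β * v i t := by
      intro t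
      have := congrFun hE t
      simpa using this
    by_cases h2 : grp j = grp i0
    · have hii0 : grp i ≠ grp i0 := fun h => hnot ⟨h, h2⟩
      by_cases hbeta : β = 0
      · -- evaluate at i0
        have hjmem : i0 ∈ (grp j).erase j :=
          Finset.mem_erase.mpr ⟨Ne.symm hji0, h2 ▸ hgrpmem i0⟩
        have h1 := hv_ne j i0 hjmem
        have hz : v i0 i0 = 0 := hv_zero i0 i0 (by simp)
        have := E i0
        rw [hz, hbeta] at this
        simp at this
        exact h1 this
      · -- evaluate at the first element of grp i ∖ {i}
        have hta : grp ((pr i).1) = grp i := grp_eq (Finset.mem_of_mem_erase (ha_mem i))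
        have h1 : v j ((pr i).1) = 0 := hv_zero' j _ (by rw [hta, h2]; exact hii0)
        have h0 : v i0 ((pr i).1) = 0 := hv_zero' i0 _ (by rw [hta]; exact hii0)
        have h3 := hv_ne i ((pr i).1) (ha_mem i)
        have := E ((pr i).1)
        rw [h1, h0] at this
        simp at this
        rcases this with h | h
        · exact hbeta h
        · exact h3 h
    · by_cases h3 : grp j = grp i
      · by_cases halpha : α = 0
        · -- evaluate at i
          have himem : i ∈ (grp j).erase j :=
            Finset.mem_erase.mpr ⟨hij, h3 ▸ (h3 ▸ hgrpmem i)⟩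
          have h1 := hv_ne j i himem
          have hz : v i i = 0 := hv_zero i i (by simp)
          have := E i
          rw [hz, halpha] at this
          simp at this
          exact h1 this
        · -- evaluate at the first element of grp i0 ∖ {i0}
          have hta : grp ((pr i0).1) = grp i0 := grp_eq (Finset.mem_of_mem_erase (ha_mem i0))
          have h1 : v j ((pr i0).1) = 0 := hv_zero' j _ (by rw [hta]; exact fun h => h2 h.symm)
          have h0 : v i ((pr i0).1) = 0 := hv_zero' i _ (by
            rw [hta]
            intro h
            exact h2 (h3.trans (h ▸ rfl)))
          have h4 := hv_ne i0 ((pr i0).1) (ha_mem i0)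
          have := E ((pr i0).1)
          rw [h1, h0] at this
          simp at this
          rcases this with h | h
          · exact halpha h
          · exact h4 h
      · -- evaluate at the first element of grp j ∖ {j}
        have hta : grp ((pr j).1) = grp j := grp_eq (Finset.mem_of_mem_erase (ha_mem j))
        have h1 := hv_ne j ((pr j).1) (ha_mem j)
        have h0 : v i0 ((pr j).1) = 0 := hv_zero' i0 _ (by rw [hta]; exact h2)
        have h0' : v i ((pr j).1) = 0 := hv_zero' i _ (by rw [hta]; exact h3)
        have := E ((pr j).1)
        rw [h0, h0'] at this
        simp at this
        exact h1 this
  -- non-proportionality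
  have hNP : ∀ (i0 i : Fin n), i ≠ i0 → Pv i ∉ Submodule.span F {Pv i0} := by
    intro i0 i hne hmem
    obtain ⟨α, hα⟩ := Submodule.mem_span_singleton.mp hmem
    have hv' : v i = α • v i0 + (0:F) • v i0 := by
      apply hlift
      rw [zero_smul, add_zero, hα]
    rw [zero_smul, add_zero] at hv'
    by_cases h : grp i = grp i0
    · have h1 : v i i0 ≠ 0 :=
        hv_ne i i0 (Finset.mem_erase.mpr ⟨Ne.symm hne, h ▸ hgrpmem i0⟩)
      have h2 : v i0 i0 = 0 := hv_zero i0 i0 (by simp)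
      apply h1
      rw [congrFun hv' i0]
      simp [h2]
    · have hta : grp ((pr i).1) = grp i := grp_eq (Finset.mem_of_mem_erase (ha_mem i))
      have h1 := hv_ne i ((pr i).1) (ha_mem i)
      have h2 : v i0 ((pr i).1) = 0 := hv_zero' i0 _ (by rw [hta]; exact h)
      apply h1
      rw [congrFun hv' ((pr i).1)]
      simp [h2]
  -- choose the base point
  have hn9 : 9 ≤ n := by omega
  set i0 : Fin n := ⟨0, by omega⟩ with hi0
  set x : (Fin n → F) ⧸ C := Pv i0 with hx
  have hx0 : x ≠ 0 := by
    intro h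
    have hC : v i0 ∈ C := by
      rw [hx, hPv] at h
      simp only at h
      rwa [Submodule.mkQ_apply, Submodule.Quotient.mk_eq_zero] at h
    have hwt : wt (v i0) ≤ 6 := by
      refine le_trans (wt_le_of_support _ ((grp i0).erase i0) ?_) (by rw [hc2]; omega)
      intro t ht
      by_contra hmem
      exact ht (hv_zero i0 t hmem)
    have hz := hA _ hC hwt
    exact hv_ne i0 ((pr i0).1) (ha_mem i0) (by rw [hz]; rfl)
  have hxU : x ∈ U := hPvU i0
  -- the point set S and the line map f
  set e2 : Fin n := (pr i0).2 with he2def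
  have he2i0 : e2 ≠ i0 := (Finset.mem_erase.mp (hb_mem i0)).1
  have he2 : e2 ∈ Finset.univ.erase i0 := Finset.mem_erase.mpr ⟨he2i0, Finset.mem_univ _⟩
  set S : Finset (Fin n) := (Finset.univ.erase i0).erase e2 with hS
  have hScard : S.card = n - 2 := by
    rw [hS, Finset.card_erase_of_mem he2, Finset.card_erase_of_mem (Finset.mem_univ i0),
      Finset.card_univ, Fintype.card_fin]
    omega
  have hSne : ∀ i ∈ S, i ≠ i0 ∧ i ≠ e2 := by
    intro i hi
    rw [hS, Finset.mem_erase, Finset.mem_erase] at hi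
    exact ⟨hi.2.1, hi.1⟩
  set f : Fin n → Submodule F ((Fin n → F) ⧸ C) :=
    fun i => Submodule.span F {x, Pv i} with hf
  have hfU : ∀ i, f i ≤ U := by
    intro i
    rw [hf]
    apply Submodule.span_le.mpr
    intro z hz
    simp only [Set.mem_insert_iff, Set.mem_singleton_iff] at hz
    rcases hz with rfl | rfl
    · exact hxU
    · exact hPvU i
  -- injectivity of f on S
  have hinj : Set.InjOn f S := by
    intro i hi j hj hfij
    by_contra hij
    have hPvj : Pv j ∈ f i := by
      rw [hfij]
      exact Submodule.subset_span (by simp)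
    obtain ⟨α, β, hαβ⟩ := Submodule.mem_span_pair.mp hPvj
    have hv' : v j = α • v i0 + β • v i := hlift j i0 i α β (by rw [← hαβ, hx])
    have hji0 : j ≠ i0 := (hSne j hj).1
    by_cases hcase : grp i = grp i0 ∧ grp j = grp i0
    · -- both i and j lie in the group of i0, hence in {e1, e2}
      have hie : i ∈ ({(pr i0).1, (pr i0).2} : Finset (Fin n)) := by
        rw [← hprs i0]
        exact Finset.mem_erase.mpr ⟨(hSne i hi).1, hcase.1 ▸ hgrpmem i⟩
      have hje : j ∈ ({(pr i0).1, (pr i0).2} : Finset (Fin n)) := by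
        rw [← hprs i0]
        exact Finset.mem_erase.mpr ⟨hji0, hcase.2 ▸ hgrpmem j⟩
      simp only [Finset.mem_insert, Finset.mem_singleton] at hie hje
      have hie2 := (hSne i hi).2
      have hje2 := (hSne j hj).2
      rw [he2def] at hie2 hje2
      rcases hie with rfl | rfl
      · rcases hje with h | h
        · exact hij (h.symm ▸ rfl)
        · exact hje2 h
      · exact hie2 rfl
    · exact keyvec i j i0 α β hji0 hij hcase hv'
  -- counting
  set B : Finset (Submodule F ((Fin n → F) ⧸ C)) := S.image f with hB
  have hBcard : B.card = n - 2 := by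
    rw [hB, Finset.card_image_of_injOn hinj, hScard]
  set A : Submodule F ((Fin n → F) ⧸ C) → Finset ((Fin n → F) ⧸ C) :=
    fun T => Finset.univ.filter (fun u => u ∈ T ∧ u ∉ Submodule.span F {x}) with hAdef
  -- each A (f i) has at least q(q-1) elements
  have hAcard : ∀ i : Fin n, i ≠ i0 → q * (q - 1) ≤ (A (f i)).card := by
    intro i hi
    have hPvi : Pv i ∉ Submodule.span F {x} := hx ▸ hNP i0 i hi
    have hmaps : ∀ p ∈ ((Finset.univ : Finset F) ×ˢ (Finset.univ.erase (0:F))),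
        (p.1 • x + p.2 • Pv i) ∈ A (f i) := by
      intro p hp
      have hp2 : p.2 ≠ 0 := (Finset.mem_erase.mp (Finset.mem_product.mp hp).2).1
      rw [hAdef]
      simp only [Finset.mem_filter, Finset.mem_univ, true_and]
      constructor
      · rw [hf]
        exact Submodule.add_mem _
          (Submodule.smul_mem _ _ (Submodule.subset_span (by simp)))
          (Submodule.smul_mem _ _ (Submodule.subset_span (by simp)))
      · intro hmem
        apply hPvi
        have h1 : p.2 • Pv i ∈ Submodule.span F {x} := by
          have h2 := Submodule.sub_mem _ hmem
            (Submodule.smul_mem _ p.1 (Submodule.mem_span_singleton_self x))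
          rwa [add_sub_cancel_left] at h2
        rwa [Submodule.smul_mem_iff _ hp2] at h1
    have hinj2 : Set.InjOn (fun p : F × F => p.1 • x + p.2 • Pv i)
        (((Finset.univ : Finset F) ×ˢ (Finset.univ.erase (0:F)) : Finset (F × F)) : Set (F × F)) := by
      intro p hp p' hp' he
      simp only at he
      have h2 : p.2 = p'.2 := by
        by_contra h22
        apply hPvi
        have hd : (p.2 - p'.2) • Pv i = (p'.1 - p.1) • x := by
          rw [sub_smul, sub_smul, sub_eq_sub_iff_add_eq_add,
            add_comm (p.2 • Pv i) (p.1 • x)]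
          exact he
        have : Pv i = ((p.2 - p'.2)⁻¹ * (p'.1 - p.1)) • x := by
          rw [mul_smul, ← hd, smul_smul, inv_mul_cancel₀ (sub_ne_zero.mpr h22), one_smul]
        rw [this]
        exact Submodule.smul_mem _ _ (Submodule.mem_span_singleton_self x)
      have h1 : p.1 = p'.1 := by
        have : p.1 • x = p'.1 • x := by
          have := he
          rw [h2] at this
          exact add_right_cancel this
        have hz : (p.1 - p'.1) • x = 0 := by rw [sub_smul, this, sub_self]
        rcases smul_eq_zero.mp hz with h | h
        · exact sub_eq_zero.mp h
        · exact absurd h hx0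
      exact Prod.ext h1 h2
    calc q * (q - 1)
        = ((Finset.univ : Finset F) ×ˢ (Finset.univ.erase (0:F))).card := by
          rw [Finset.card_product, Finset.card_univ, hq,
            Finset.card_erase_of_mem (Finset.mem_univ _), Finset.card_univ, hq]
      _ ≤ (A (f i)).card := Finset.card_le_card_of_injOn _ hmaps hinj2
  -- the A T for T ∈ B are pairwise disjoint
  have hspan_of : ∀ (i : Fin n) (u : (Fin n → F) ⧸ C), u ∈ f i →
      u ∉ Submodule.span F {x} → f i = Submodule.span F {x, u} := by
    intro i u hu hunz
    obtain ⟨α, β, hαβ⟩ := Submodule.mem_span_pair.mp (by rw [hf] at hu; exact hu)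
    have hβ : β ≠ 0 := by
      rintro rfl
      apply hunz
      rw [← hαβ, zero_smul, add_zero]
      exact Submodule.smul_mem _ _ (Submodule.mem_span_singleton_self x)
    rw [hf]
    exact span_pair_eq_span_pair hαβ hβ
  have hdisjA : ∀ T ∈ B, ∀ T' ∈ B, T ≠ T' → Disjoint (A T) (A T') := by
    intro T hT T' hT' hne
    rw [Finset.disjoint_left]
    intro u hu hu'
    obtain ⟨i, hiS, rfl⟩ := Finset.mem_image.mp hT
    obtain ⟨i', hi'S, rfl⟩ := Finset.mem_image.mp hT'
    rw [hAdef] at hu hu'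
    simp only [Finset.mem_filter, Finset.mem_univ, true_and] at hu hu'
    exact hne ((hspan_of i u hu.1 hu.2).trans (hspan_of i' u hu'.1 hu'.2).symm)
  -- all the A T sit inside U ∖ span {x}
  set bigF : Finset ((Fin n → F) ⧸ C) :=
    Finset.univ.filter (fun u => u ∈ U ∧ u ∉ Submodule.span F {x}) with hbigF
  have hsubbig : ∀ T ∈ B, A T ⊆ bigF := by
    intro T hT u hu
    obtain ⟨i, hiS, rfl⟩ := Finset.mem_image.mp hT
    rw [hAdef] at hu
    rw [hbigF]
    simp only [Finset.mem_filter, Finset.mem_univ, true_and] at hu ⊢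
    exact ⟨hfU i hu.1, hu.2⟩
  -- cardinality of bigF
  have hUcard : Fintype.card U = q ^ 4 := by
    rw [Module.card_eq_pow_finrank (K := F) (V := U), hfinU, hq]
  have hscard : Fintype.card (Submodule.span F {x} : Submodule F ((Fin n → F) ⧸ C)) = q := by
    rw [← hq]
    exact (Fintype.card_congr (LinearEquiv.toSpanNonzeroSingleton F _ x hx0).toEquiv).symm
  have hbigFcard : bigF.card ≤ q ^ 4 - q := by
    have hsplit : bigF = (Finset.univ.filter (fun u => u ∈ U)) \ (Finset.univ.filter (fun u => u ∈ Submodule.span F {x})) := by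
      ext u
      rw [hbigF]
      simp only [Finset.mem_filter, Finset.mem_sdiff, Finset.mem_univ, true_and]
    have hss : (Finset.univ.filter (fun u => u ∈ Submodule.span F {x})) ⊆
        (Finset.univ.filter (fun u => u ∈ U)) := by
      intro u hu
      simp only [Finset.mem_filter, Finset.mem_univ, true_and] at hu ⊢
      have hxle : Submodule.span F {x} ≤ U :=
        Submodule.span_le.mpr (Set.singleton_subset_iff.mpr hxU)
      exact hxle hu
    rw [hsplit, Finset.card_sdiff_of_subset hss]
    have h1 : (Finset.univ.filter (fun u => u ∈ U)).card = q ^ 4 := by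
      rw [← hUcard]
      exact (Fintype.card_subtype _).symm
    have h2 : (Finset.univ.filter (fun u => u ∈ Submodule.span F {x})).card = q := by
      rw [← hscard]
      exact (Fintype.card_subtype _).symm
    rw [h1, h2]
  -- put everything together
  have hmain : (n - 2) * (q * (q - 1)) ≤ q ^ 4 - q := by
    have h1 : B.card * (q * (q - 1)) ≤ ∑ T ∈ B, (A T).card := by
      rw [← smul_eq_mul]
      apply Finset.card_nsmul_le_sum
      intro T hT
      obtain ⟨i, hiS, rfl⟩ := Finset.mem_image.mp hT
      exact hAcard i (hSne i hiS).1
    have h2 : ∑ T ∈ B, (A T).card = (B.biUnion A).card :=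
      (Finset.card_biUnion hdisjA).symm
    have h3 : (B.biUnion A).card ≤ bigF.card :=
      Finset.card_le_card (Finset.biUnion_subset.mpr hsubbig)
    calc (n - 2) * (q * (q - 1)) = B.card * (q * (q - 1)) := by rw [hBcard]
      _ ≤ ∑ T ∈ B, (A T).card := h1
      _ = (B.biUnion A).card := h2
      _ ≤ bigF.card := h3
      _ ≤ q ^ 4 - q := hbigFcard
  -- final arithmetic
  by_contra hcon
  push_neg at hcon
  have h1 : q ^ 2 + q + 2 ≤ n - 2 := by omega
  obtain ⟨p, rfl⟩ : ∃ p, q = p + 2 := ⟨q - 2, by omega⟩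
  have h2 : ((p + 2) ^ 2 + (p + 2) + 2) * ((p + 2) * (p + 2 - 1)) ≤ (p + 2) ^ 4 - (p + 2) :=
    le_trans (Nat.mul_le_mul_right _ h1) hmain
  have h3 : p + 2 ≤ (p + 2) ^ 4 := Nat.le_self_pow (by norm_num) _
  have h4 : ((p + 2) ^ 2 + (p + 2) + 2) * ((p + 2) * (p + 1)) + (p + 2) ≤ (p + 2) ^ 4 := by
    have he : p + 2 - 1 = p + 1 := by omega
    rw [he] at h2
    exact (Nat.le_sub_iff_add_le h3).mp h2
  nlinarith [h4, sq_nonneg (p + 2)]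
end

section
/- (Core of the sufficiency direction of Lemma 5) Let q be a prime power, L ≥ 3 an integer, and let u_1^(i), u_2^(i) ∈ F_q^4 (i = 1,…,L) satisfy conditions C.1, C.2 and C.3. Let H be the (L+4) × 3L matrix over F_q whose entry in row i ∈ {1,…,L} and column 3(i−1)+a (a ∈ {1,2,3}) equals 1 and whose other entries in the first L rows are 0, and whose last four rows restricted to columns 3(i−1)+1, 3(i−1)+2, 3(i−1)+3 are the column vectors u_1^(i), u_2^(i), 0 ∈ F_q^4 respectively. Then any six columns of H are linearly independent over F_q. -/
/-- Conditions C.1, C.2 and C.3 on a sequence of vectors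
`u_1^(i), u_2^(i) ∈ F_q^4`, `i = 1, …, L`, where `u_0^(i) := u_1^(i) − u_2^(i)`. -/
def GoodSeq {F : Type*} [Field F] (L : ℕ) (u₁ u₂ : Fin L → (Fin 4 → F)) : Prop :=
  -- C.1
  (∀ i : Fin L, Module.finrank F (Submodule.span F {u₁ i, u₂ i}) = 2) ∧
  -- C.2
  (∀ i j : Fin L, i < j →
      Submodule.span F {u₁ i, u₂ i} ⊓ Submodule.span F {u₁ j, u₂ j} = ⊥) ∧
  -- C.3
  (∀ i j t : Fin L, i < j → j < t → ∀ a b c : Fin 3,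
      Module.finrank F (Submodule.span F
        ({![u₁ i - u₂ i, u₁ i, u₂ i] a,
           ![u₁ j - u₂ j, u₁ j, u₂ j] b,
           ![u₁ t - u₂ t, u₁ t, u₂ t] c} : Set (Fin 4 → F))) = 3)

/-- The `(L+4) × 3L` parity-check matrix `H` of Lemma 5: the entry in row `i ∈ {1,…,L}` and
column `3(i−1)+a` (`a ∈ {1,2,3}`) equals `1`, the other entries of the first `L` rows are `0`,
and the last four rows restricted to the columns `3(i−1)+1, 3(i−1)+2, 3(i−1)+3` are the column
vectors `u₁ i`, `u₂ i`, `0 ∈ F^4` respectively (here everything is written `0`-indexed). -/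
def H {F : Type*} [Field F] (L : ℕ) (u₁ u₂ : Fin L → (Fin 4 → F)) :
    Matrix (Fin (L + 4)) (Fin (3 * L)) F :=
  Matrix.of fun v j =>
    if hv : (v : ℕ) < L then (if (j : ℕ) / 3 = (v : ℕ) then 1 else 0)
    else
      have hj : (j : ℕ) / 3 < L := by have := j.isLt; omega
      have hv4 : (v : ℕ) - L < 4 := by have := v.isLt; omega
      if (j : ℕ) % 3 = 0 then u₁ ⟨(j : ℕ) / 3, hj⟩ ⟨(v : ℕ) - L, hv4⟩
      else if (j : ℕ) % 3 = 1 then u₂ ⟨(j : ℕ) / 3, hj⟩ ⟨(v : ℕ) - L, hv4⟩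
      else 0

/-! ### Auxiliary machinery -/

/-- The column index of block `i`, position `a`. -/
def eIdx (L : ℕ) (i : Fin L) (a : Fin 3) : Fin (3 * L) :=
  ⟨3 * (i : ℕ) + (a : ℕ), by have := i.isLt; have := a.isLt; omega⟩

@[simp] lemma eIdx_val (L : ℕ) (i : Fin L) (a : Fin 3) :
    ((eIdx L i a : Fin (3 * L)) : ℕ) = 3 * (i : ℕ) + (a : ℕ) := rfl

lemma eIdx_inj (L : ℕ) (i : Fin L) {a a' : Fin 3} (h : eIdx L i a = eIdx L i a') :
    a = a' := by
  have h' : 3 * (i : ℕ) + (a : ℕ) = 3 * (i : ℕ) + (a' : ℕ) := congrArg Fin.val h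
  exact Fin.ext (by omega)

lemma sum_split {M : Type*} [AddCommMonoid M] (L : ℕ) (f : Fin (3 * L) → M) :
    ∑ j, f j = ∑ i : Fin L, ∑ a : Fin 3, f (eIdx L i a) := by
  have h1 : ∑ p : Fin L × Fin 3, f (eIdx L p.1 p.2) = ∑ j, f j := by
    refine Fintype.sum_bijective (fun p : Fin L × Fin 3 => eIdx L p.1 p.2) ?_ _ _
      (fun p => rfl)
    rw [Fintype.bijective_iff_injective_and_card]
    constructor
    · rintro ⟨i, a⟩ ⟨i', a'⟩ h
      have h' : 3 * (i : ℕ) + (a : ℕ) = 3 * (i' : ℕ) + (a' : ℕ) := congrArg Fin.val h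
      have := a.isLt; have := a'.isLt
      have h1 : (i : ℕ) = i' := by omega
      have h2 : (a : ℕ) = a' := by omega
      exact Prod.ext (Fin.ext h1) (Fin.ext h2)
    · simp [mul_comm]
  rw [← h1, Fintype.sum_prod_type]

section HVal
variable {F : Type*} [Field F] (L : ℕ) (u₁ u₂ : Fin L → (Fin 4 → F))

lemma H_top (i' i : Fin L) (a : Fin 3) :
    H L u₁ u₂ ⟨(i : ℕ), by have := i.isLt; omega⟩ (eIdx L i' a) =
      if i' = i then 1 else 0 := by
  have ha := a.isLt
  have hdiv : (3 * (i' : ℕ) + (a : ℕ)) / 3 = (i' : ℕ) := by omega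
  simp only [H, Matrix.of_apply, eIdx_val, dif_pos (show ((i:ℕ)) < L from i.isLt)]
  simp only [hdiv]
  by_cases h : i' = i
  · simp [h]
  · rw [if_neg (fun hv => h (Fin.ext hv)), if_neg h]

lemma H_bot (i : Fin L) (a : Fin 3) (r : Fin 4) :
    H L u₁ u₂ ⟨L + (r : ℕ), by have := r.isLt; omega⟩ (eIdx L i a) =
      if (a : ℕ) = 0 then u₁ i r else if (a : ℕ) = 1 then u₂ i r else 0 := by
  have ha := a.isLt
  have hdiv : (3 * (i : ℕ) + (a : ℕ)) / 3 = (i : ℕ) := by omega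
  have hmod : (3 * (i : ℕ) + (a : ℕ)) % 3 = (a : ℕ) := by omega
  simp only [H, Matrix.of_apply, eIdx_val, dif_neg (show ¬ (L + (r:ℕ)) < L by omega)]
  simp only [hdiv, hmod]
  have h1 : (⟨(i : ℕ), by have := i.isLt; omega⟩ : Fin L) = i := rfl
  have h2 : (⟨L + (r : ℕ) - L, by have := r.isLt; omega⟩ : Fin 4) = r := by
    apply Fin.ext; simp
  rw [h1, h2]

end HVal

section Aux
variable {F : Type*} [Field F]

lemma li_pair_of_finrank {x y : Fin 4 → F}
    (h : Module.finrank F (Submodule.span F ({x, y} : Set (Fin 4 → F))) = 2) :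
    LinearIndependent F ![x, y] := by
  rw [linearIndependent_iff_card_eq_finrank_span]
  have hr : Set.range ![x, y] = ({x, y} : Set (Fin 4 → F)) := by
    ext w; simp [Matrix.range_cons, Matrix.range_empty]; tauto
  rw [Set.finrank, hr, h]
  simp

lemma li_triple_of_finrank {x y z : Fin 4 → F}
    (h : Module.finrank F (Submodule.span F ({x, y, z} : Set (Fin 4 → F))) = 3) :
    LinearIndependent F ![x, y, z] := by
  rw [linearIndependent_iff_card_eq_finrank_span]
  have hr : Set.range ![x, y, z] = ({x, y, z} : Set (Fin 4 → F)) := by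
    ext w; simp [Matrix.range_cons, Matrix.range_empty]; tauto
  rw [Set.finrank, hr, h]
  simp

lemma pair_coeffs {x y : Fin 4 → F} (h : LinearIndependent F ![x, y]) {a b : F}
    (hab : a • x + b • y = 0) : a = 0 ∧ b = 0 := by
  have := Fintype.linearIndependent_iff.mp h ![a, b]
    (by simpa [Fin.sum_univ_two] using hab)
  exact ⟨this 0, this 1⟩

lemma triple_coeffs {x y z : Fin 4 → F} (h : LinearIndependent F ![x, y, z]) {a b c : F}
    (hab : a • x + b • y + c • z = 0) : a = 0 ∧ b = 0 ∧ c = 0 := by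
  have := Fintype.linearIndependent_iff.mp h ![a, b, c]
    (by simpa [Fin.sum_univ_three] using hab)
  exact ⟨this 0, this 1, this 2⟩

end Aux

set_option maxHeartbeats 1600000 in
/-- **Core of the sufficiency direction of Lemma 5.** If the vectors
`u_1^(i), u_2^(i) ∈ F_q^4` (`i = 1,…,L`) satisfy conditions C.1, C.2 and C.3, then any six
columns of the matrix `H` are linearly independent over `F_q`. -/
theorem lemma5_sufficiency_core
    (F : Type*) [Field F] [Fintype F] [DecidableEq F]
    (L : ℕ) (hL : 3 ≤ L)
    (u₁ u₂ : Fin L → (Fin 4 → F))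
    (hgood : GoodSeq L u₁ u₂) :
    ∀ s : Finset (Fin (3 * L)), s.card = 6 →
      LinearIndependent F (fun j : s => fun v : Fin (L + 4) => H L u₁ u₂ v j) := by
  classical
  obtain ⟨hC1, hC2, hC3⟩ := hgood
  intro s hs
  rw [Fintype.linearIndependent_iff]
  intro g hg
  -- extend `g` by zero to all columns
  set c : Fin (3 * L) → F := fun j => if h : j ∈ s then g ⟨j, h⟩ else 0 with hc
  have hczero : ∀ j, j ∉ s → c j = 0 := by
    intro j hj; rw [hc]; simp [dif_neg hj]
  have hcg : ∀ j : s, c (j : Fin (3 * L)) = g j := by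
    intro j; rw [hc]; simp [dif_pos j.2]
  -- every row gives a linear relation on `c`
  have hrow : ∀ v : Fin (L + 4), ∑ j, c j * H L u₁ u₂ v j = 0 := by
    intro v
    have h1 := congrFun hg v
    simp only [Finset.sum_apply, Pi.smul_apply, smul_eq_mul, Pi.zero_apply] at h1
    calc ∑ j, c j * H L u₁ u₂ v j = ∑ j ∈ s, c j * H L u₁ u₂ v j := by
          refine (Finset.sum_subset s.subset_univ ?_).symm
          intro j _ hj; rw [hczero j hj, zero_mul]
      _ = ∑ j : s, c (j : Fin (3 * L)) * H L u₁ u₂ v j := by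
          rw [← Finset.sum_attach s (fun j => c j * H L u₁ u₂ v j),
            Finset.univ_eq_attach]
      _ = 0 := by
          rw [← h1]
          exact Finset.sum_congr rfl fun j _ => by rw [hcg j]
  -- the first `L` rows : within each block the coefficients sum to zero
  have hrowi : ∀ i : Fin L,
      c (eIdx L i 0) + c (eIdx L i 1) + c (eIdx L i 2) = 0 := by
    intro i
    have h := hrow ⟨(i : ℕ), by have := i.isLt; omega⟩
    rw [sum_split] at h
    simp only [H_top L u₁ u₂] at h
    rw [Finset.sum_eq_single_of_mem i (Finset.mem_univ i)
      (fun b _ hb => by simp [hb])] at h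
    simpa [Fin.sum_univ_three] using h
  -- the last four rows
  have hbot : ∀ r : Fin 4,
      ∑ i : Fin L, (c (eIdx L i 0) * u₁ i r + c (eIdx L i 1) * u₂ i r) = 0 := by
    intro r
    have h := hrow ⟨L + (r : ℕ), by have := r.isLt; omega⟩
    rw [sum_split] at h
    simp only [H_bot L u₁ u₂] at h
    simpa [Fin.sum_univ_three] using h
  -- block contributions
  set w : Fin L → (Fin 4 → F) :=
    fun i => c (eIdx L i 0) • u₁ i + c (eIdx L i 1) • u₂ i with hwdef
  have hwsum : ∑ i, w i = (0 : Fin 4 → F) := by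
    funext r
    rw [Finset.sum_apply]
    simpa [hwdef] using hbot r
  have hLIpair : ∀ i, LinearIndependent F ![u₁ i, u₂ i] :=
    fun i => li_pair_of_finrank (hC1 i)
  have hwzero : ∀ i, w i = 0 →
      c (eIdx L i 0) = 0 ∧ c (eIdx L i 1) = 0 ∧ c (eIdx L i 2) = 0 := by
    intro i h
    obtain ⟨hA, hB⟩ := pair_coeffs (hLIpair i) h
    exact ⟨hA, hB, by simpa [hA, hB] using hrowi i⟩
  have hmemw : ∀ i, w i ∈ Submodule.span F ({u₁ i, u₂ i} : Set (Fin 4 → F)) := fun i =>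
    Submodule.add_mem _
      (Submodule.smul_mem _ _ (Submodule.subset_span (Set.mem_insert _ _)))
      (Submodule.smul_mem _ _ (Submodule.subset_span (Set.mem_insert_of_mem _ rfl)))
  -- counting
  set T : Finset (Fin L) := Finset.univ.filter (fun i => w i ≠ 0) with hT
  set U : Finset (Fin (3 * L)) := Finset.univ.filter (fun j => c j ≠ 0) with hU
  have hUsub : U ⊆ s := by
    intro j hj
    by_contra hns
    exact (Finset.mem_filter.mp hj).2 (hczero j hns)
  have hU6 : U.card ≤ 6 := hs ▸ Finset.card_le_card hUsub
  set blk : Fin (3 * L) → Fin L :=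
    fun j => ⟨(j : ℕ) / 3, by have := j.isLt; omega⟩ with hblk
  have hblk_eIdx : ∀ (i : Fin L) (a : Fin 3), blk (eIdx L i a) = i := by
    intro i a
    have := a.isLt
    apply Fin.ext
    simp only [hblk, eIdx_val]
    omega
  set fib : Fin L → Finset (Fin (3 * L)) :=
    fun i => U.filter (fun j => blk j = i) with hfib
  have hfibsum : ∑ i : Fin L, (fib i).card = U.card :=
    (Finset.card_eq_sum_card_fiberwise (fun j _ => Finset.mem_univ (blk j))).symm
  have hmemfib : ∀ (i : Fin L) (a : Fin 3), c (eIdx L i a) ≠ 0 → eIdx L i a ∈ fib i := by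
    intro i a hca
    rw [hfib]
    exact Finset.mem_filter.mpr ⟨Finset.mem_filter.mpr ⟨Finset.mem_univ _, hca⟩, hblk_eIdx i a⟩
  have hfib2 : ∀ i ∈ T, 2 ≤ (fib i).card := by
    intro i hiT
    have hwi : w i ≠ 0 := (Finset.mem_filter.mp hiT).2
    have hAB : ¬ (c (eIdx L i 0) = 0 ∧ c (eIdx L i 1) = 0) := by
      rintro ⟨hA, hB⟩
      exact hwi (by rw [hwdef]; simp [hA, hB])
    have hsum3 := hrowi i
    obtain ⟨a₁, a₂, hne, h1, h2⟩ : ∃ a₁ a₂ : Fin 3, a₁ ≠ a₂ ∧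
        c (eIdx L i a₁) ≠ 0 ∧ c (eIdx L i a₂) ≠ 0 := by
      by_cases hA : c (eIdx L i 0) = 0
      · have hB : c (eIdx L i 1) ≠ 0 := fun h => hAB ⟨hA, h⟩
        have hD : c (eIdx L i 2) ≠ 0 := by
          intro h; exact hB (by simpa [hA, h] using hsum3)
        exact ⟨1, 2, by decide, hB, hD⟩
      · by_cases hB : c (eIdx L i 1) = 0
        · have hD : c (eIdx L i 2) ≠ 0 := by
            intro h; exact hA (by simpa [hB, h] using hsum3)
          exact ⟨0, 2, by decide, hA, hD⟩
        · exact ⟨0, 1, by decide, hA, hB⟩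
    have hpair : ({eIdx L i a₁, eIdx L i a₂} : Finset (Fin (3 * L))) ⊆ fib i := by
      intro x hx
      rcases Finset.mem_insert.mp hx with rfl | hx
      · exact hmemfib i a₁ h1
      · rw [Finset.mem_singleton.mp hx]
        exact hmemfib i a₂ h2
    calc 2 = ({eIdx L i a₁, eIdx L i a₂} : Finset (Fin (3 * L))).card :=
          (Finset.card_pair (fun h => hne (eIdx_inj L i h))).symm
      _ ≤ (fib i).card := Finset.card_le_card hpair
  have hfible : ∀ i : Fin L, (fib i).card ≤ 3 := by
    intro i
    have hsubset : fib i ⊆ Finset.image (eIdx L i) Finset.univ := by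
      intro j hj
      have hblkj : blk j = i := (Finset.mem_filter.mp hj).2
      have hdivj : (j : ℕ) / 3 = (i : ℕ) := congrArg Fin.val hblkj
      have hjlt := j.isLt
      refine Finset.mem_image.mpr ⟨⟨(j : ℕ) % 3, by omega⟩, Finset.mem_univ _, ?_⟩
      apply Fin.ext
      simp only [eIdx_val]
      omega
    calc (fib i).card ≤ (Finset.image (eIdx L i) Finset.univ).card :=
          Finset.card_le_card hsubset
      _ ≤ (Finset.univ : Finset (Fin 3)).card := Finset.card_image_le
      _ = 3 := by simp
  have hTfib : ∑ i ∈ T, (fib i).card ≤ 6 := by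
    calc ∑ i ∈ T, (fib i).card ≤ ∑ i : Fin L, (fib i).card :=
          Finset.sum_le_sum_of_subset (Finset.subset_univ T)
      _ = U.card := hfibsum
      _ ≤ 6 := hU6
  have hT3 : 2 * T.card ≤ 6 := by
    calc 2 * T.card = ∑ _i ∈ T, 2 := by rw [Finset.sum_const, smul_eq_mul, mul_comm]
      _ ≤ ∑ i ∈ T, (fib i).card := Finset.sum_le_sum hfib2
      _ ≤ 6 := hTfib
  -- the main claim : all block contributions vanish
  have hwall : ∀ i, w i = 0 := by
    by_contra hcon
    push_neg at hcon
    obtain ⟨i0, hi0⟩ := hcon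
    have hi0T : i0 ∈ T := Finset.mem_filter.mpr ⟨Finset.mem_univ _, hi0⟩
    have hT1 : 1 ≤ T.card := Finset.card_pos.mpr ⟨i0, hi0T⟩
    have hsumT : ∑ i ∈ T, w i = 0 := by
      have hsplit2 := Finset.sum_filter_add_sum_filter_not Finset.univ
        (fun i => w i ≠ 0) w
      have hz : ∑ i ∈ Finset.univ.filter (fun i => ¬ w i ≠ 0), w i = 0 :=
        Finset.sum_eq_zero (fun i hi => not_not.mp (Finset.mem_filter.mp hi).2)
      have hsplit3 := hsplit2
      rw [hz, add_zero, hwsum] at hsplit3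
      rw [hT]
      exact hsplit3
    have hcases : T.card = 1 ∨ T.card = 2 ∨ T.card = 3 := by omega
    rcases hcases with h1 | h2 | h3
    · -- one nonzero block : its contribution is the whole sum, hence zero
      obtain ⟨i, hTi⟩ := Finset.card_eq_one.mp h1
      have hiT : i ∈ T := hTi ▸ Finset.mem_singleton_self i
      have hwi : w i ≠ 0 := (Finset.mem_filter.mp hiT).2
      apply hwi
      rw [hTi, Finset.sum_singleton] at hsumT
      exact hsumT
    · -- two nonzero blocks : use C.2
      obtain ⟨i, j, hij, hTij⟩ := Finset.card_eq_two.mp h2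
      have hiT : i ∈ T := by rw [hTij]; simp
      have hwi : w i ≠ 0 := (Finset.mem_filter.mp hiT).2
      rw [hTij, Finset.sum_pair hij] at hsumT
      have hmem : w i ∈ Submodule.span F ({u₁ i, u₂ i} : Set (Fin 4 → F)) ⊓
          Submodule.span F ({u₁ j, u₂ j} : Set (Fin 4 → F)) := by
        refine Submodule.mem_inf.mpr ⟨hmemw i, ?_⟩
        have hwij : w i = -w j := eq_neg_of_add_eq_zero_left hsumT
        rw [hwij]
        exact Submodule.neg_mem _ (hmemw j)
      rcases lt_or_gt_of_ne hij with h | h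
      · rw [hC2 i j h, Submodule.mem_bot] at hmem
        exact hwi hmem
      · have hji := hC2 j i h
        rw [inf_comm] at hji
        rw [hji, Submodule.mem_bot] at hmem
        exact hwi hmem
    · -- three nonzero blocks : each has exactly two nonzero coefficients ; use C.3
      obtain ⟨i, j, t, hij, hit, hjt, hTijt⟩ := Finset.card_eq_three.mp h3
      have h2i := hfib2 i (by rw [hTijt]; simp)
      have h2j := hfib2 j (by rw [hTijt]; simp)
      have h2t := hfib2 t (by rw [hTijt]; simp)
      have hsumfib : (fib i).card + ((fib j).card + (fib t).card) ≤ 6 := by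
        have h6 := hTfib
        rw [hTijt, Finset.sum_insert (by simp [hij, hit]),
          Finset.sum_insert (by simp [hjt]), Finset.sum_singleton] at h6
        exact h6
      have hkey : ∀ x ∈ T, ∃ (k : Fin 3) (γ : F), γ ≠ 0 ∧
          w x = γ • ![u₁ x - u₂ x, u₁ x, u₂ x] k := by
        intro x hxT
        have hwx : w x ≠ 0 := (Finset.mem_filter.mp hxT).2
        have hfx2 : (fib x).card ≤ 2 := by
          have hx3 : x = i ∨ x = j ∨ x = t := by
            rw [hTijt] at hxT; simpa using hxT
          rcases hx3 with rfl | rfl | rfl <;> omega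
        have hAB : ¬ (c (eIdx L x 0) = 0 ∧ c (eIdx L x 1) = 0) := by
          rintro ⟨hA, hB⟩
          exact hwx (by rw [hwdef]; simp [hA, hB])
        have hnot3 : ¬ (c (eIdx L x 0) ≠ 0 ∧ c (eIdx L x 1) ≠ 0 ∧
            c (eIdx L x 2) ≠ 0) := by
          rintro ⟨hA, hB, hD⟩
          have hsub : ({eIdx L x 0, eIdx L x 1, eIdx L x 2} :
              Finset (Fin (3 * L))) ⊆ fib x := by
            intro y hy
            simp only [Finset.mem_insert, Finset.mem_singleton] at hy
            rcases hy with rfl | rfl | rfl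
            exacts [hmemfib x 0 hA, hmemfib x 1 hB, hmemfib x 2 hD]
          have hne01 : eIdx L x 0 ≠ eIdx L x 1 := by
            intro h; have := congrArg Fin.val h
            simp only [eIdx_val] at this; omega
          have hne02 : eIdx L x 0 ≠ eIdx L x 2 := by
            intro h; have := congrArg Fin.val h
            simp only [eIdx_val] at this; omega
          have hne12 : eIdx L x 1 ≠ eIdx L x 2 := by
            intro h; have := congrArg Fin.val h
            simp only [eIdx_val] at this; omega
          have hcard3 : ({eIdx L x 0, eIdx L x 1, eIdx L x 2} :
              Finset (Fin (3 * L))).card = 3 :=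
            Finset.card_eq_three.mpr ⟨_, _, _, hne01, hne02, hne12, rfl⟩
          have := Finset.card_le_card hsub
          omega
        have hsum3 := hrowi x
        by_cases hD : c (eIdx L x 2) = 0
        · rw [hD, add_zero] at hsum3
          have hBA : c (eIdx L x 1) = - c (eIdx L x 0) :=
            eq_neg_of_add_eq_zero_right hsum3
          have hA : c (eIdx L x 0) ≠ 0 := by
            intro h0
            exact hAB ⟨h0, by rw [hBA, h0, neg_zero]⟩
          refine ⟨0, c (eIdx L x 0), hA, ?_⟩
          show c (eIdx L x 0) • u₁ x + c (eIdx L x 1) • u₂ x = _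
          rw [hBA]
          simp [smul_sub, neg_smul, sub_eq_add_neg]
        · rcases (by tauto : c (eIdx L x 0) = 0 ∨ c (eIdx L x 1) = 0) with hA | hB
          · have hB : c (eIdx L x 1) ≠ 0 := fun h => hAB ⟨hA, h⟩
            refine ⟨2, c (eIdx L x 1), hB, ?_⟩
            show c (eIdx L x 0) • u₁ x + c (eIdx L x 1) • u₂ x = _
            simp [hA]
          · have hA : c (eIdx L x 0) ≠ 0 := fun h => hAB ⟨h, hB⟩
            refine ⟨1, c (eIdx L x 0), hA, ?_⟩
            show c (eIdx L x 0) • u₁ x + c (eIdx L x 1) • u₂ x = _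
            simp [hB]
      obtain ⟨ki, γi, hγi, hwi⟩ := hkey i (by rw [hTijt]; simp)
      obtain ⟨kj, γj, hγj, hwj⟩ := hkey j (by rw [hTijt]; simp)
      obtain ⟨kt, γt, hγt, hwt⟩ := hkey t (by rw [hTijt]; simp)
      rw [hTijt, Finset.sum_insert (by simp [hij, hit]),
        Finset.sum_insert (by simp [hjt]), Finset.sum_singleton,
        hwi, hwj, hwt, ← add_assoc] at hsumT
      have hLI3 : LinearIndependent F
          ![![u₁ i - u₂ i, u₁ i, u₂ i] ki, ![u₁ j - u₂ j, u₁ j, u₂ j] kj,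
            ![u₁ t - u₂ t, u₁ t, u₂ t] kt] := by
        apply li_triple_of_finrank
        rcases lt_or_gt_of_ne hij with h1 | h1 <;>
          rcases lt_or_gt_of_ne hit with h2 | h2 <;>
            rcases lt_or_gt_of_ne hjt with h3 | h3
        · exact hC3 i j t h1 h3 ki kj kt
        · have hset : ({![u₁ i - u₂ i, u₁ i, u₂ i] ki, ![u₁ j - u₂ j, u₁ j, u₂ j] kj,
              ![u₁ t - u₂ t, u₁ t, u₂ t] kt} : Set (Fin 4 → F)) =
              {![u₁ i - u₂ i, u₁ i, u₂ i] ki, ![u₁ t - u₂ t, u₁ t, u₂ t] kt,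
              ![u₁ j - u₂ j, u₁ j, u₂ j] kj} := by
            ext v; simp only [Set.mem_insert_iff, Set.mem_singleton_iff]; tauto
          rw [hset]; exact hC3 i t j h2 h3 ki kt kj
        · exact absurd ((h1.trans h3).trans h2) (lt_irrefl i)
        · have hset : ({![u₁ i - u₂ i, u₁ i, u₂ i] ki, ![u₁ j - u₂ j, u₁ j, u₂ j] kj,
              ![u₁ t - u₂ t, u₁ t, u₂ t] kt} : Set (Fin 4 → F)) =
              {![u₁ t - u₂ t, u₁ t, u₂ t] kt, ![u₁ i - u₂ i, u₁ i, u₂ i] ki,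
              ![u₁ j - u₂ j, u₁ j, u₂ j] kj} := by
            ext v; simp only [Set.mem_insert_iff, Set.mem_singleton_iff]; tauto
          rw [hset]; exact hC3 t i j h2 h1 kt ki kj
        · have hset : ({![u₁ i - u₂ i, u₁ i, u₂ i] ki, ![u₁ j - u₂ j, u₁ j, u₂ j] kj,
              ![u₁ t - u₂ t, u₁ t, u₂ t] kt} : Set (Fin 4 → F)) =
              {![u₁ j - u₂ j, u₁ j, u₂ j] kj, ![u₁ i - u₂ i, u₁ i, u₂ i] ki,
              ![u₁ t - u₂ t, u₁ t, u₂ t] kt} := by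
            ext v; simp only [Set.mem_insert_iff, Set.mem_singleton_iff]; tauto
          rw [hset]; exact hC3 j i t h1 h2 kj ki kt
        · exact absurd ((h2.trans h3).trans h1) (lt_irrefl i)
        · have hset : ({![u₁ i - u₂ i, u₁ i, u₂ i] ki, ![u₁ j - u₂ j, u₁ j, u₂ j] kj,
              ![u₁ t - u₂ t, u₁ t, u₂ t] kt} : Set (Fin 4 → F)) =
              {![u₁ j - u₂ j, u₁ j, u₂ j] kj, ![u₁ t - u₂ t, u₁ t, u₂ t] kt,
              ![u₁ i - u₂ i, u₁ i, u₂ i] ki} := by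
            ext v; simp only [Set.mem_insert_iff, Set.mem_singleton_iff]; tauto
          rw [hset]; exact hC3 j t i h3 h2 kj kt ki
        · have hset : ({![u₁ i - u₂ i, u₁ i, u₂ i] ki, ![u₁ j - u₂ j, u₁ j, u₂ j] kj,
              ![u₁ t - u₂ t, u₁ t, u₂ t] kt} : Set (Fin 4 → F)) =
              {![u₁ t - u₂ t, u₁ t, u₂ t] kt, ![u₁ j - u₂ j, u₁ j, u₂ j] kj,
              ![u₁ i - u₂ i, u₁ i, u₂ i] ki} := by
            ext v; simp only [Set.mem_insert_iff, Set.mem_singleton_iff]; tauto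
          rw [hset]; exact hC3 t j i h3 h1 kt kj ki
      obtain ⟨h01, _, _⟩ := triple_coeffs hLI3 hsumT
      exact hγi h01
  -- conclude
  have hcall : ∀ (i : Fin L) (a : Fin 3), c (eIdx L i a) = 0 := by
    intro i a
    obtain ⟨hA, hB, hD⟩ := hwzero i (hwall i)
    fin_cases a
    · exact hA
    · exact hB
    · exact hD
  intro j0
  rw [← hcg j0]
  have hj3 := (j0 : Fin (3 * L)).isLt
  have hrepr : (j0 : Fin (3 * L)) =
      eIdx L ⟨((j0 : Fin (3 * L)) : ℕ) / 3, by omega⟩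
        ⟨((j0 : Fin (3 * L)) : ℕ) % 3, by omega⟩ := by
    apply Fin.ext
    simp only [eIdx_val]
    omega
  rw [hrepr]
  exact hcall _ _
end
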